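/- arXiv:2006.03912 — 8 statements merged into one kernel-verified Lean document; each statement's English description precedes it below -/
import Mathlib

section
/- Let T ≥ 1 and let f_1, …, f_{T+1} : ℝ^n → ℝ be differentiable functions, each μ-strongly convex and L-smooth (0 < μ ≤ L), each with a (necessarily unique) global minimizer x*_t, so that ∇f_t(x*_t) = 0. Let (A_t) be symmetric matrices satisfying λ'·I ⪯ A_t ⪯ λ·I with 0 < λ' ≤ λ, and assume the condition-number bound λ/λ' < 1 + μ²/(4L²). Define the online preconditioned gradient descent iterates by x_{t+1} = x_t − η A_t^{-1} ∇f_t(x_t) with step size η = λ'μ/(2L²), starting from an arbitrary x_1 ∈ ℝ^n. Then the dynamic regret satisfies Σ_{t=1}^T (f_t(x_t) − f_t(x*_t)) ≤ (L²/μ)·((4L²λ − μ²λ')/(μ²λ' − 4L²λ + 4L²λ'))·Σ_{t=2}^{T+1} ‖x*_t − x*_{t-1}‖² + (L²λ/(λ'μ) − μ/4)·‖x_1 − x*_1‖². -/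
open Finset
open scoped RealInnerProductSpace

set_option maxHeartbeats 2000000 in
/-- Theorem 1, OPGD dynamic regret bound, unconstrained case. -/
theorem opgd_dynamic_regret {n : ℕ} (T : ℕ) (hT : 1 ≤ T)
    (f : ℕ → EuclideanSpace ℝ (Fin n) → ℝ)
    (μ L : ℝ) (hμ : 0 < μ) (hμL : μ ≤ L)
    (xstar : ℕ → EuclideanSpace ℝ (Fin n))
    (hdiff : ∀ t, 1 ≤ t → t ≤ T + 1 → Differentiable ℝ (f t))
    (hstrong : ∀ t, 1 ≤ t → t ≤ T + 1 → ∀ x y,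
      f t y + ⟪gradient (f t) y, x - y⟫ + μ / 2 * ‖x - y‖ ^ 2 ≤ f t x)
    (hsmooth : ∀ t, 1 ≤ t → t ≤ T + 1 → ∀ x y,
      f t x ≤ f t y + ⟪gradient (f t) y, x - y⟫ + L / 2 * ‖x - y‖ ^ 2)
    (hmin : ∀ t, 1 ≤ t → t ≤ T + 1 → ∀ x, f t (xstar t) ≤ f t x)
    (hgrad0 : ∀ t, 1 ≤ t → t ≤ T + 1 → gradient (f t) (xstar t) = 0)
    (A Ainv : ℕ → EuclideanSpace ℝ (Fin n) →L[ℝ] EuclideanSpace ℝ (Fin n))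
    (hAsymm : ∀ t x y, ⟪A t x, y⟫ = ⟪x, A t y⟫)
    (hAinv₁ : ∀ t, (A t).comp (Ainv t) = ContinuousLinearMap.id ℝ _)
    (hAinv₂ : ∀ t, (Ainv t).comp (A t) = ContinuousLinearMap.id ℝ _)
    (lam' lam : ℝ) (hlam' : 0 < lam') (hlam : lam' ≤ lam)
    (hAlow : ∀ t x, lam' * ‖x‖ ^ 2 ≤ ⟪A t x, x⟫)
    (hAupp : ∀ t x, ⟪A t x, x⟫ ≤ lam * ‖x‖ ^ 2)
    (hcond : lam / lam' < 1 + μ ^ 2 / (4 * L ^ 2))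
    (η : ℝ) (hη : η = lam' * μ / (2 * L ^ 2))
    (x : ℕ → EuclideanSpace ℝ (Fin n))
    (hupdate : ∀ t, 1 ≤ t → t ≤ T →
      x (t + 1) = x t - η • Ainv t (gradient (f t) (x t))) :
    ∑ t ∈ Icc 1 T, (f t (x t) - f t (xstar t)) ≤
      (L ^ 2 / μ) * ((4 * L ^ 2 * lam - μ ^ 2 * lam') /
          (μ ^ 2 * lam' - 4 * L ^ 2 * lam + 4 * L ^ 2 * lam')) *
        ∑ t ∈ Icc 2 (T + 1), ‖xstar t - xstar (t - 1)‖ ^ 2 +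
      (L ^ 2 * lam / (lam' * μ) - μ / 4) * ‖x 1 - xstar 1‖ ^ 2 := by

  classical
  have hL : 0 < L := lt_of_lt_of_le hμ hμL
  have hL2 : (0:ℝ) < 2 * L ^ 2 := by nlinarith
  obtain ⟨CC, hCC⟩ : ∃ c : ℝ, c = L ^ 2 / μ := ⟨_, rfl⟩
  obtain ⟨P, hPdef⟩ : ∃ p : ℝ, p = lam / lam' - μ ^ 2 / (4 * L ^ 2) := ⟨_, rfl⟩
  have hP1 : P < 1 := by rw [hPdef]; linarith
  have hP0 : 0 < P := by
    rw [hPdef]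
    have h1 : (1:ℝ) ≤ lam / lam' := (one_le_div hlam').mpr hlam
    have h2 : μ ^ 2 / (4 * L ^ 2) < 1 := by
      rw [div_lt_one (by nlinarith)]; nlinarith
    linarith
  have h1P : 0 < 1 - P := by linarith
  have hη0 : 0 < η := by rw [hη]; exact div_pos (mul_pos hlam' hμ) hL2
  have hCC0 : 0 < CC := by rw [hCC]; exact div_pos (by positivity) hμ
  have key : ∀ t, 1 ≤ t → t ≤ T →
      f t (x t) - f t (xstar t) ≤
        CC * P * ‖x t - xstar t‖ ^ 2 - CC * P * ‖x (t + 1) - xstar (t + 1)‖ ^ 2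
          + CC * P / (1 - P) * ‖xstar (t + 1) - xstar t‖ ^ 2 := by
    intro t ht1 ht2
    have ht2' : t ≤ T + 1 := le_trans ht2 (Nat.le_succ T)
    set X := x t with hX
    set S := xstar t with hS
    set g := gradient (f t) (x t) with hg
    set u := Ainv t g with hu
    set D := X - S with hD
    have hAu : A t u = g := by
      have h := congrArg (fun (m : EuclideanSpace ℝ (Fin n) →L[ℝ] EuclideanSpace ℝ (Fin n)) => m g) (hAinv₁ t)
      simpa using h
    -- smoothness at the minimizer
    have hs2 : f t X - f t S ≤ L / 2 * ‖D‖ ^ 2 := by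
      have h := hsmooth t ht1 ht2' X S
      rw [hgrad0 t ht1 ht2'] at h
      rw [inner_zero_left] at h
      rw [← hD] at h
      linarith
    -- gradient norm bound
    have hs1' : f t S ≤ f t X - ‖g‖ ^ 2 / (2 * L) := by
      have hm := hmin t ht1 ht2' (X - L⁻¹ • g)
      have h := hsmooth t ht1 ht2' (X - L⁻¹ • g) X
      have e1 : X - L⁻¹ • g - X = -(L⁻¹ • g) := by abel
      rw [e1, inner_neg_right, real_inner_smul_right, real_inner_self_eq_norm_sq,
        norm_neg, norm_smul, Real.norm_eq_abs, abs_of_pos (inv_pos.mpr hL)] at h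
      have e2 : L / 2 * (L⁻¹ * ‖g‖) ^ 2 = ‖g‖ ^ 2 / (2 * L) := by
        field_simp
      rw [e2] at h
      have e3 : L⁻¹ * ‖g‖ ^ 2 = 2 * (‖g‖ ^ 2 / (2 * L)) := by
        field_simp
      rw [e3] at h
      linarith
    have hgb : ‖g‖ ^ 2 ≤ L ^ 2 * ‖D‖ ^ 2 := by
      have h1 : ‖g‖ ^ 2 ≤ (f t X - f t S) * (2 * L) := by
        rw [← div_le_iff₀ (by positivity)]
        linarith
      nlinarith [h1, hs2, hL]
    -- strong convexity cross term
    have hsc : f t X - f t S + μ / 2 * ‖D‖ ^ 2 ≤ ⟪g, D⟫ := by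
      have h := hstrong t ht1 ht2' S X
      have e1 : S - X = -D := by rw [hD]; abel
      rw [e1, inner_neg_right, norm_neg] at h
      linarith
    -- inverse bound
    have h3 : ⟪g, u⟫ ≤ ‖g‖ ^ 2 / lam' := by
      have hlow := hAlow t u
      rw [hAu] at hlow
      have hcs : ⟪g, u⟫ ≤ ‖g‖ * ‖u‖ := real_inner_le_norm g u
      rcases eq_or_lt_of_le (norm_nonneg u) with hb | hb
      · have hu0 : u = 0 := norm_eq_zero.mp hb.symm
        rw [hu0, inner_zero_right]
        positivity
      · rw [le_div_iff₀ hlam']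
        nlinarith [hlow, hcs, mul_pos hlam' hb, norm_nonneg g]
    -- expansion of the A-quadratic form
    have hexp : ⟪A t (D - η • u), D - η • u⟫
        = ⟪A t D, D⟫ - 2 * η * ⟪g, D⟫ + η ^ 2 * ⟪g, u⟫ := by
      have hsy := hAsymm t D u
      rw [hAu] at hsy
      simp only [map_sub, map_smul, inner_sub_left, inner_sub_right,
        real_inner_smul_left, real_inner_smul_right, hAu]
      rw [hsy, real_inner_comm D g]
      ring
    have hmain : lam' * ‖D - η • u‖ ^ 2 ≤ lam * ‖D‖ ^ 2 - 2 * η * ⟪g, D⟫ + η ^ 2 * ⟪g, u⟫ := by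
      have hl := hAlow t (D - η • u)
      have hup := hAupp t D
      rw [hexp] at hl
      linarith
    -- per-step function gap bound
    have hfinal : f t X - f t S ≤ CC * (P * ‖D‖ ^ 2 - ‖D - η • u‖ ^ 2) := by
      have hq1 : ⟪g, u⟫ ≤ L ^ 2 * ‖D‖ ^ 2 / lam' := by
        refine le_trans h3 ?_
        gcongr
      have hc : lam' * ‖D - η • u‖ ^ 2 ≤
          lam * ‖D‖ ^ 2 - 2 * η * (f t X - f t S) - η * μ * ‖D‖ ^ 2
            + η ^ 2 * (L ^ 2 * ‖D‖ ^ 2 / lam') := by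
        nlinarith [hmain, hsc, hq1, sq_nonneg η, hη0]
      have hco : lam - η * μ + η ^ 2 * L ^ 2 / lam' = lam' * P := by
        rw [hη, hPdef]; field_simp; ring
      have h2e : 2 * η * CC = lam' := by
        rw [hη, hCC]; field_simp
      have h6 : 2 * η * (f t X - f t S) ≤ 2 * η * (CC * (P * ‖D‖ ^ 2 - ‖D - η • u‖ ^ 2)) := by
        have e4 : 2 * η * (CC * (P * ‖D‖ ^ 2 - ‖D - η • u‖ ^ 2))
            = lam' * P * ‖D‖ ^ 2 - lam' * ‖D - η • u‖ ^ 2 := by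
          have : 2 * η * (CC * (P * ‖D‖ ^ 2 - ‖D - η • u‖ ^ 2))
              = (2 * η * CC) * (P * ‖D‖ ^ 2 - ‖D - η • u‖ ^ 2) := by ring
          rw [this, h2e]; ring
        rw [e4]
        have hco' : (lam - η * μ + η ^ 2 * L ^ 2 / lam') * ‖D‖ ^ 2 = lam' * P * ‖D‖ ^ 2 := by
          rw [hco]
        have hco'' : (lam - η * μ + η ^ 2 * L ^ 2 / lam') * ‖D‖ ^ 2
            = lam * ‖D‖ ^ 2 - η * μ * ‖D‖ ^ 2 + η ^ 2 * (L ^ 2 * ‖D‖ ^ 2 / lam') := by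
          ring
        linarith [hc, hco', hco'']
      exact le_of_mul_le_mul_left (by linarith) (by linarith : (0:ℝ) < 2 * η)
    -- shift to the next minimizer
    have hupd := hupdate t ht1 ht2
    have hxe : x (t + 1) - xstar (t + 1) = (D - η • u) - (xstar (t + 1) - S) := by
      rw [hupd, hD, hS, hu, hg, hX]
      abel
    have htri : ‖x (t + 1) - xstar (t + 1)‖ ≤ ‖D - η • u‖ + ‖xstar (t + 1) - S‖ := by
      rw [hxe]; exact norm_sub_le _ _
    have hkey2 : P * (1 - P) * ‖x (t + 1) - xstar (t + 1)‖ ^ 2 ≤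
        (1 - P) * ‖D - η • u‖ ^ 2 + P * ‖xstar (t + 1) - S‖ ^ 2 := by
      have hsq : ‖x (t + 1) - xstar (t + 1)‖ ^ 2 ≤ (‖D - η • u‖ + ‖xstar (t + 1) - S‖) ^ 2 := by
        have := norm_nonneg (x (t + 1) - xstar (t + 1))
        nlinarith [htri, norm_nonneg (D - η • u), norm_nonneg (xstar (t + 1) - S)]
      nlinarith [hsq, sq_nonneg ((1 - P) * ‖D - η • u‖ - P * ‖xstar (t + 1) - S‖),
        mul_pos hP0 h1P]
    have hdiv : P * ‖x (t + 1) - xstar (t + 1)‖ ^ 2 - ‖D - η • u‖ ^ 2 ≤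
        P * ‖xstar (t + 1) - S‖ ^ 2 / (1 - P) := by
      rw [le_div_iff₀ h1P]
      nlinarith [hkey2]
    have hCP : CC * P / (1 - P) * ‖xstar (t + 1) - S‖ ^ 2
        = CC * (P * ‖xstar (t + 1) - S‖ ^ 2 / (1 - P)) := by
      field_simp
    calc f t X - f t S ≤ CC * (P * ‖D‖ ^ 2 - ‖D - η • u‖ ^ 2) := hfinal
      _ ≤ CC * (P * ‖D‖ ^ 2 - P * ‖x (t + 1) - xstar (t + 1)‖ ^ 2
            + P * ‖xstar (t + 1) - S‖ ^ 2 / (1 - P)) := by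
          apply mul_le_mul_of_nonneg_left _ hCC0.le
          linarith [hdiv]
      _ = CC * P * ‖D‖ ^ 2 - CC * P * ‖x (t + 1) - xstar (t + 1)‖ ^ 2
            + CC * P / (1 - P) * ‖xstar (t + 1) - S‖ ^ 2 := by
          rw [hCP]; ring
  -- summation
  have hsum1 : ∑ t ∈ Icc 1 T, (f t (x t) - f t (xstar t)) ≤
      ∑ t ∈ Icc 1 T, (CC * P * ‖x t - xstar t‖ ^ 2 - CC * P * ‖x (t + 1) - xstar (t + 1)‖ ^ 2
        + CC * P / (1 - P) * ‖xstar (t + 1) - xstar t‖ ^ 2) := by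
    refine Finset.sum_le_sum fun t ht => ?_
    rw [mem_Icc] at ht
    exact key t ht.1 ht.2
  have htel : ∑ t ∈ Icc 1 T, (CC * P * ‖x t - xstar t‖ ^ 2
      - CC * P * ‖x (t + 1) - xstar (t + 1)‖ ^ 2)
      = CC * P * ‖x 1 - xstar 1‖ ^ 2 - CC * P * ‖x (T + 1) - xstar (T + 1)‖ ^ 2 := by
    rw [← Finset.Ico_add_one_right_eq_Icc, Finset.sum_Ico_eq_sum_range]
    try simp only [Nat.add_sub_cancel]
    have := Finset.sum_range_sub' (fun i => CC * P * ‖x (1 + i) - xstar (1 + i)‖ ^ 2) T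
    simpa [Nat.add_comm] using this
  have hre : ∑ t ∈ Icc 1 T, ‖xstar (t + 1) - xstar t‖ ^ 2
      = ∑ t ∈ Icc 2 (T + 1), ‖xstar t - xstar (t - 1)‖ ^ 2 := by
    rw [← Finset.Ico_add_one_right_eq_Icc, ← Finset.Ico_add_one_right_eq_Icc, Finset.sum_Ico_eq_sum_range,
      Finset.sum_Ico_eq_sum_range]
    have e4 : T + 1 - 1 = T := by omega
    have e5 : T + 1 + 1 - 2 = T := by omega
    rw [e4, e5]
    refine Finset.sum_congr rfl fun i _ => ?_
    have e6 : 1 + i + 1 = 2 + i := by omega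
    have e7 : 2 + i - 1 = 1 + i := by omega
    rw [e6, e7]
  have hsplit : ∑ t ∈ Icc 1 T, (CC * P * ‖x t - xstar t‖ ^ 2
        - CC * P * ‖x (t + 1) - xstar (t + 1)‖ ^ 2
        + CC * P / (1 - P) * ‖xstar (t + 1) - xstar t‖ ^ 2)
      = (CC * P * ‖x 1 - xstar 1‖ ^ 2 - CC * P * ‖x (T + 1) - xstar (T + 1)‖ ^ 2)
        + CC * P / (1 - P) * ∑ t ∈ Icc 2 (T + 1), ‖xstar t - xstar (t - 1)‖ ^ 2 := by
    rw [Finset.sum_add_distrib, htel, ← Finset.mul_sum, hre]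
  have hdrop : 0 ≤ CC * P * ‖x (T + 1) - xstar (T + 1)‖ ^ 2 :=
    mul_nonneg (mul_nonneg hCC0.le hP0.le) (sq_nonneg _)
  have hden : 0 < μ ^ 2 * lam' - 4 * L ^ 2 * lam + 4 * L ^ 2 * lam' := by
    have h' := (div_lt_iff₀ hlam').mp hcond
    have h'' := mul_lt_mul_of_pos_right h' (show (0:ℝ) < 4 * L ^ 2 by nlinarith)
    have e : (1 + μ ^ 2 / (4 * L ^ 2)) * lam' * (4 * L ^ 2)
        = 4 * L ^ 2 * lam' + μ ^ 2 * lam' := by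
      field_simp
    rw [e] at h''
    nlinarith [h'']
  have hC1 : CC * P = L ^ 2 * lam / (lam' * μ) - μ / 4 := by
    rw [hCC, hPdef]
    field_simp
  have hC2 : CC * P / (1 - P) = (L ^ 2 / μ) * ((4 * L ^ 2 * lam - μ ^ 2 * lam') /
      (μ ^ 2 * lam' - 4 * L ^ 2 * lam + 4 * L ^ 2 * lam')) := by
    rw [div_eq_iff (by exact h1P.ne')]
    rw [hCC, hPdef]
    field_simp
    rw [eq_div_iff (by intro h; linarith)]
    ring
  have hsumS : 0 ≤ ∑ t ∈ Icc 2 (T + 1), ‖xstar t - xstar (t - 1)‖ ^ 2 :=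
    Finset.sum_nonneg fun t _ => by positivity
  calc ∑ t ∈ Icc 1 T, (f t (x t) - f t (xstar t))
      ≤ (CC * P * ‖x 1 - xstar 1‖ ^ 2 - CC * P * ‖x (T + 1) - xstar (T + 1)‖ ^ 2)
        + CC * P / (1 - P) * ∑ t ∈ Icc 2 (T + 1), ‖xstar t - xstar (t - 1)‖ ^ 2 := by
        rw [← hsplit]; exact hsum1
    _ ≤ CC * P * ‖x 1 - xstar 1‖ ^ 2
        + CC * P / (1 - P) * ∑ t ∈ Icc 2 (T + 1), ‖xstar t - xstar (t - 1)‖ ^ 2 := by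
        linarith
    _ = (L ^ 2 / μ) * ((4 * L ^ 2 * lam - μ ^ 2 * lam') /
          (μ ^ 2 * lam' - 4 * L ^ 2 * lam + 4 * L ^ 2 * lam')) *
          ∑ t ∈ Icc 2 (T + 1), ‖xstar t - xstar (t - 1)‖ ^ 2
        + (L ^ 2 * lam / (lam' * μ) - μ / 4) * ‖x 1 - xstar 1‖ ^ 2 := by
        rw [← hC1, ← hC2]; ring
end

section
/- Let T ≥ 1 and let f_1, …, f_{T+1} : ℝ^n → ℝ be differentiable functions, each μ-strongly convex and L-smooth (0 < μ ≤ L), with minimizers x*_t. Define the online gradient descent iterates x_{t+1} = x_t − η ∇f_t(x_t) with step size η = μ/(2L²), starting from an arbitrary x_1 ∈ ℝ^n. Then the dynamic regret satisfies Σ_{t=1}^T (f_t(x_t) − f_t(x*_t)) ≤ (L²/μ)·((4L² − μ²)/μ²)·Σ_{t=2}^{T+1} ‖x*_t − x*_{t-1}‖² + (L²/μ − μ/4)·‖x_1 − x*_1‖²; in particular the dynamic regret is bounded by a constant (depending only on μ, L, and ‖x_1 − x*_1‖) times (1 + Σ_{t=2}^{T+1} ‖x*_t − x*_{t-1}‖²).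 -/
open Finset
open scoped RealInnerProductSpace

private lemma ogd_shift_Icc (u : ℕ → ℝ) (T : ℕ) :
    ∑ t ∈ Icc 1 T, u (t+1) = ∑ t ∈ Icc 2 (T+1), u t := by
  induction T with
  | zero => simp
  | succ N ih =>
    rw [Finset.sum_Icc_succ_top (by omega), Finset.sum_Icc_succ_top (by omega), ih]

private lemma ogd_telescope_Icc (u : ℕ → ℝ) (T : ℕ) (hT : 1 ≤ T) :
    ∑ t ∈ Icc 1 T, (u t - u (t+1)) = u 1 - u (T+1) := by
  induction T with
  | zero => omega
  | succ N ih =>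
    rcases Nat.eq_zero_or_pos N with h | h
    · subst h; simp
    · rw [Finset.sum_Icc_succ_top (by omega), ih h]; ring

/-- If `f` is `L`-smooth and `xs` is a global minimizer, then for any point `x`,
`‖∇f(x)‖² / (2L) ≤ f x - f xs`. -/
private lemma ogd_gradsq {n : ℕ} (f : EuclideanSpace ℝ (Fin n) → ℝ) (L : ℝ) (hL : 0 < L)
    (xs : EuclideanSpace ℝ (Fin n))
    (hsmooth : ∀ x y, f x ≤ f y + ⟪gradient f y, x - y⟫ + L / 2 * ‖x - y‖ ^ 2)
    (hmin : ∀ x, f xs ≤ f x) (z : EuclideanSpace ℝ (Fin n)) :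
    ‖gradient f z‖ ^ 2 / (2 * L) ≤ f z - f xs := by
  set g := gradient f z with hg
  have h := hsmooth (z - (L⁻¹ : ℝ) • g) z
  have hmin' := hmin (z - (L⁻¹ : ℝ) • g)
  have hs : z - (L⁻¹:ℝ) • g - z = -((L⁻¹:ℝ) • g) := by abel
  rw [hs] at h
  have h1 : ⟪g, -((L⁻¹:ℝ)•g)⟫ = -(L⁻¹ * ‖g‖^2) := by
    rw [inner_neg_right, real_inner_smul_right, real_inner_self_eq_norm_sq]
  have h2 : ‖-((L⁻¹:ℝ)•g)‖^2 = (L⁻¹)^2 * ‖g‖^2 := by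
    rw [norm_neg, norm_smul, mul_pow, Real.norm_eq_abs, sq_abs]
  rw [h1, h2] at h
  have heq : f z + -(L⁻¹ * ‖g‖^2) + L/2 * ((L⁻¹)^2 * ‖g‖^2)
      = f z - ‖g‖^2 / (2*L) := by
    field_simp; ring
  rw [heq] at h
  linarith

private lemma ogd_gradzero {n : ℕ} (f : EuclideanSpace ℝ (Fin n) → ℝ) (L : ℝ) (hL : 0 < L)
    (xs : EuclideanSpace ℝ (Fin n))
    (hsmooth : ∀ x y, f x ≤ f y + ⟪gradient f y, x - y⟫ + L / 2 * ‖x - y‖ ^ 2)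
    (hmin : ∀ x, f xs ≤ f x) : gradient f xs = 0 := by
  have h := ogd_gradsq f L hL xs hsmooth hmin xs
  set g := gradient f xs
  have h4 : ‖g‖^2/(2*L) ≤ 0 := by linarith
  have h5 := mul_nonpos_of_nonneg_of_nonpos (by linarith : (0:ℝ) ≤ 2*L) h4
  have hgsq : ‖g‖^2 ≤ 0 := by
    calc ‖g‖^2 = 2*L * (‖g‖^2/(2*L)) := by field_simp
    _ ≤ 0 := h5
  have : ‖g‖ = 0 := by nlinarith [norm_nonneg g]
  simpa using this

set_option maxHeartbeats 1000000 in
/-- Corollary: OGD achieves `O(C*_{2,T})` dynamic regret. -/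
theorem ogd_dynamic_regret {n : ℕ} (T : ℕ) (hT : 1 ≤ T)
    (f : ℕ → EuclideanSpace ℝ (Fin n) → ℝ)
    (μ L : ℝ) (hμ : 0 < μ) (hμL : μ ≤ L)
    (xstar : ℕ → EuclideanSpace ℝ (Fin n))
    (hdiff : ∀ t, 1 ≤ t → t ≤ T + 1 → Differentiable ℝ (f t))
    (hstrong : ∀ t, 1 ≤ t → t ≤ T + 1 → ∀ x y,
      f t y + ⟪gradient (f t) y, x - y⟫ + μ / 2 * ‖x - y‖ ^ 2 ≤ f t x)
    (hsmooth : ∀ t, 1 ≤ t → t ≤ T + 1 → ∀ x y,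
      f t x ≤ f t y + ⟪gradient (f t) y, x - y⟫ + L / 2 * ‖x - y‖ ^ 2)
    (hmin : ∀ t, 1 ≤ t → t ≤ T + 1 → ∀ x, f t (xstar t) ≤ f t x)
    (η : ℝ) (hη : η = μ / (2 * L ^ 2))
    (x : ℕ → EuclideanSpace ℝ (Fin n))
    (hupdate : ∀ t, 1 ≤ t → t ≤ T →
      x (t + 1) = x t - η • gradient (f t) (x t)) :
    (∑ t ∈ Icc 1 T, (f t (x t) - f t (xstar t)) ≤
      (L ^ 2 / μ) * ((4 * L ^ 2 - μ ^ 2) / μ ^ 2) *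
        ∑ t ∈ Icc 2 (T + 1), ‖xstar t - xstar (t - 1)‖ ^ 2 +
      (L ^ 2 / μ - μ / 4) * ‖x 1 - xstar 1‖ ^ 2) ∧
    ∃ C : ℝ, 0 ≤ C ∧
      ∑ t ∈ Icc 1 T, (f t (x t) - f t (xstar t)) ≤
        C * (1 + ∑ t ∈ Icc 2 (T + 1), ‖xstar t - xstar (t - 1)‖ ^ 2) := by
  have hL : 0 < L := lt_of_lt_of_le hμ hμL
  set A : ℝ := L ^ 2 / μ - μ / 4 with hA
  set K : ℝ := (L ^ 2 / μ) * ((4 * L ^ 2 - μ ^ 2) / μ ^ 2) with hK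
  have hA0 : 0 ≤ A := by
    rw [hA]; rw [div_sub_div _ _ (ne_of_gt hμ) (by norm_num : (4:ℝ) ≠ 0)]
    apply div_nonneg _ (by linarith)
    nlinarith
  have hK0 : 0 ≤ K := by
    apply mul_nonneg (div_nonneg (sq_nonneg L) hμ.le)
    apply div_nonneg (by nlinarith) (sq_nonneg μ)
  clear_value A K
  -- Key per-step inequality
  have key : ∀ t, 1 ≤ t → t ≤ T →
      f t (x t) - f t (xstar t) ≤
        A * ‖x t - xstar t‖ ^ 2 - A * ‖x (t+1) - xstar (t+1)‖ ^ 2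
          + K * ‖xstar (t+1) - xstar t‖ ^ 2 := by
    intro t h1 h2
    set r := f t (x t) - f t (xstar t) with hr
    set g := gradient (f t) (x t) with hg
    set a := ‖x t - xstar t‖ ^ 2 with ha
    set b := ‖x (t+1) - xstar t‖ ^ 2 with hb
    set a' := ‖x (t+1) - xstar (t+1)‖ ^ 2 with ha'
    set d := ‖xstar (t+1) - xstar t‖ ^ 2 with hd
    have ht1 : t ≤ T + 1 := by omega
    -- gradient at minimizer is zero
    have hg0 : gradient (f t) (xstar t) = 0 :=
      ogd_gradzero (f t) L hL (xstar t) (hsmooth t h1 ht1) (hmin t h1 ht1)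
    -- gradient norm bound : ‖g‖² ≤ L² a
    have hgn : ‖g‖ ^ 2 ≤ L ^ 2 * a := by
      have hb1 := ogd_gradsq (f t) L hL (xstar t) (hsmooth t h1 ht1) (hmin t h1 ht1) (x t)
      have hb2 := hsmooth t h1 ht1 (x t) (xstar t)
      rw [hg0, inner_zero_left] at hb2
      have : ‖g‖ ^ 2 / (2 * L) ≤ L / 2 * a := by rw [ha]; linarith
      have h2L : (0:ℝ) < 2 * L := by linarith
      calc ‖g‖ ^ 2 = 2 * L * (‖g‖ ^ 2 / (2 * L)) := by field_simp
      _ ≤ 2 * L * (L / 2 * a) := by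
          exact mul_le_mul_of_nonneg_left this (by linarith)
      _ = L ^ 2 * a := by ring
    -- strong convexity inner product bound
    have hin : r + μ / 2 * a ≤ ⟪g, x t - xstar t⟫ := by
      have h := hstrong t h1 ht1 (xstar t) (x t)
      have e1 : ⟪g, xstar t - x t⟫ = -⟪g, x t - xstar t⟫ := by
        rw [← inner_neg_right]; congr 1; abel
      have e2 : ‖xstar t - x t‖ = ‖x t - xstar t‖ := norm_sub_rev _ _
      rw [e1, e2] at h
      rw [hr, ha]; linarith
    -- expansion of b
    have hbe : b = a - 2 * η * ⟪g, x t - xstar t⟫ + η ^ 2 * ‖g‖ ^ 2 := by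
      have hu : x (t+1) - xstar t = (x t - xstar t) - η • g := by
        rw [hupdate t h1 h2]; abel
      rw [hb, hu, norm_sub_sq_real, real_inner_smul_right, norm_smul, mul_pow,
        Real.norm_eq_abs, sq_abs, ha, real_inner_comm]
      ring
    -- Lemma 1 : regret ≤ A a - (L²/μ) b
    have lem1 : r ≤ A * a - (L ^ 2 / μ) * b := by
      have ha0 : 0 ≤ a := sq_nonneg _
      have hηpos : 0 < η := by rw [hη]; positivity
      have hb2 : b ≤ a - 2 * η * (r + μ / 2 * a) + η ^ 2 * (L ^ 2 * a) := by
        have c1 := mul_le_mul_of_nonneg_left hin (by linarith : (0:ℝ) ≤ 2 * η)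
        have c2 := mul_le_mul_of_nonneg_left hgn (sq_nonneg η)
        linarith [hbe, c1, c2]
      have hmul := mul_le_mul_of_nonneg_left hb2
        (le_of_lt (by positivity : (0:ℝ) < L ^ 2 / μ))
      have hsimp : (L ^ 2 / μ) * (a - 2 * η * (r + μ / 2 * a) + η ^ 2 * (L ^ 2 * a))
          = A * a - r := by
        rw [hA, hη]; field_simp; ring
      rw [hsimp] at hmul
      linarith
    -- Lemma 2 : A a' ≤ (L²/μ) b + K d
    have lem2 : A * a' ≤ (L ^ 2 / μ) * b + K * d := by
      set p := ‖x (t+1) - xstar t‖ with hp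
      set q := ‖xstar (t+1) - xstar t‖ with hq
      have hp0 : 0 ≤ p := norm_nonneg _
      have hq0 : 0 ≤ q := norm_nonneg _
      have htri : ‖x (t+1) - xstar (t+1)‖ ≤ p + q := by
        have : x (t+1) - xstar (t+1) = (x (t+1) - xstar t) - (xstar (t+1) - xstar t) := by
          abel
        rw [this, hp, hq]
        exact (norm_sub_le _ _).trans (by rw [norm_sub_rev (xstar (t+1)) (xstar t)])
      have ha'le : a' ≤ (p + q) ^ 2 := by
        rw [ha']
        exact pow_le_pow_left₀ (norm_nonneg _) htri 2
      have hineq : A * (p + q) ^ 2 ≤ (L ^ 2 / μ) * p ^ 2 + K * q ^ 2 := by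
        rw [hA, hK]
        have hkey : (L ^ 2 / μ) * p ^ 2 + (L ^ 2 / μ) * ((4 * L ^ 2 - μ ^ 2) / μ ^ 2) * q ^ 2
            - (L ^ 2 / μ - μ / 4) * (p + q) ^ 2
            = (μ ^ 2 * p - (4 * L ^ 2 - μ ^ 2) * q) ^ 2 / (4 * μ ^ 3) := by
          field_simp
          ring
        have hnn : 0 ≤ (μ ^ 2 * p - (4 * L ^ 2 - μ ^ 2) * q) ^ 2 / (4 * μ ^ 3) :=
          div_nonneg (sq_nonneg _) (by positivity)
        linarith
      calc A * a' ≤ A * (p + q) ^ 2 := mul_le_mul_of_nonneg_left ha'le hA0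
      _ ≤ (L ^ 2 / μ) * p ^ 2 + K * q ^ 2 := hineq
      _ = (L ^ 2 / μ) * b + K * d := by rw [hb, hd]
    clear_value r a b a' d
    linarith
  -- Sum the key inequality
  have hsum : ∑ t ∈ Icc 1 T, (f t (x t) - f t (xstar t)) ≤
      A * ‖x 1 - xstar 1‖ ^ 2 - A * ‖x (T+1) - xstar (T+1)‖ ^ 2
        + K * ∑ t ∈ Icc 2 (T+1), ‖xstar t - xstar (t-1)‖ ^ 2 := by
    have h1 : ∑ t ∈ Icc 1 T, (f t (x t) - f t (xstar t)) ≤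
        ∑ t ∈ Icc 1 T, ((fun s => A * ‖x s - xstar s‖ ^ 2) t
          - (fun s => A * ‖x s - xstar s‖ ^ 2) (t+1)
          + K * ‖xstar (t+1) - xstar ((t+1)-1)‖ ^ 2) := by
      apply Finset.sum_le_sum
      intro t ht
      rw [Finset.mem_Icc] at ht
      have := key t ht.1 ht.2
      simp only [Nat.add_sub_cancel]
      linarith [this]
    rw [Finset.sum_add_distrib, ← Finset.mul_sum,
      ogd_telescope_Icc (fun s => A * ‖x s - xstar s‖ ^ 2) T hT,
      ogd_shift_Icc (fun s => ‖xstar s - xstar (s-1)‖ ^ 2) T] at h1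
    linarith
  have hfinal : ∑ t ∈ Icc 1 T, (f t (x t) - f t (xstar t)) ≤
      K * ∑ t ∈ Icc 2 (T+1), ‖xstar t - xstar (t-1)‖ ^ 2 + A * ‖x 1 - xstar 1‖ ^ 2 := by
    have := mul_nonneg hA0 (sq_nonneg ‖x (T+1) - xstar (T+1)‖)
    linarith
  constructor
  · exact hfinal
  · refine ⟨K + A * ‖x 1 - xstar 1‖ ^ 2, by positivity, ?_⟩
    have hD : 0 ≤ ∑ t ∈ Icc 2 (T+1), ‖xstar t - xstar (t-1)‖ ^ 2 :=
      Finset.sum_nonneg fun t _ => sq_nonneg _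
    nlinarith [mul_nonneg (mul_nonneg hA0 (sq_nonneg ‖x 1 - xstar 1‖)) hD, hK0]
end

section
/- Let T ≥ 1 and let f_1, …, f_{T+1} : ℝ^n → ℝ be twice continuously differentiable functions, each μ-strongly convex and L-smooth (0 < μ ≤ L) (so that μ·I ⪯ ∇²f_t(x) ⪯ L·I for all x), with minimizers x*_t. Fix ζ > 4L²(L − μ)/μ² − μ, and define the regularized online Newton iterates x_{t+1} = x_t − η (∇²f_t(x_t) + ζ·I)^{-1} ∇f_t(x_t) with step size η = (μ + ζ)μ/(2L²), starting from an arbitrary x_1 ∈ ℝ^n. Then the dynamic regret satisfies Σ_{t=1}^T (f_t(x_t) − f_t(x*_t)) ≤ (L²/μ)·((4L²(L+ζ) − μ²(μ+ζ))/(μ²(μ+ζ) − 4L²(L+ζ) + 4L²(μ+ζ)))·Σ_{t=2}^{T+1} ‖x*_t − x*_{t-1}‖² + (L²(L+ζ)/((μ+ζ)μ) − μ/4)·‖x_1 − x*_1‖², where the coefficient of the path-length term is positive and finite because (L+ζ)/(μ+ζ) < 1 + μ²/(4L²). -/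
set_option maxHeartbeats 1000000

open Finset
open scoped RealInnerProductSpace

section Aux
variable {E : Type*} [NormedAddCommGroup E] [InnerProductSpace ℝ E]

lemma psd_inner_sq_le (A : E →L[ℝ] E)
    (hsym : ∀ u v : E, ⟪A u, v⟫ = ⟪A v, u⟫) (hpsd : ∀ w : E, 0 ≤ ⟪A w, w⟫) (u v : E) :
    ⟪A u, v⟫ ^ 2 ≤ ⟪A u, u⟫ * ⟪A v, v⟫ := by
  have key : ∀ t : ℝ, 0 ≤ ⟪A v, v⟫ * (t * t) + (2 * ⟪A u, v⟫) * t + ⟪A u, u⟫ := by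
    intro t
    have h := hpsd (u + t • v)
    have e : ⟪A (u + t • v), u + t • v⟫
        = ⟪A v, v⟫ * (t * t) + (2 * ⟪A u, v⟫) * t + ⟪A u, u⟫ := by
      rw [map_add, map_smul]
      simp only [inner_add_left, inner_add_right, real_inner_smul_left, real_inner_smul_right]
      rw [hsym v u]
      ring
    linarith [e ▸ h]
  have hd := discrim_le_zero key
  rw [discrim] at hd
  nlinarith [hd]

lemma psd_norm_apply_le (A : E →L[ℝ] E) (C : ℝ)
    (hsym : ∀ u v : E, ⟪A u, v⟫ = ⟪A v, u⟫) (hpsd : ∀ w : E, 0 ≤ ⟪A w, w⟫)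
    (hub : ∀ w : E, ⟪A w, w⟫ ≤ C * ‖w‖ ^ 2) (hC : 0 ≤ C) (v : E) :
    ‖A v‖ ≤ C * ‖v‖ := by
  have h1 := psd_inner_sq_le A hsym hpsd v (A v)
  have e1 : ⟪A v, A v⟫ = ‖A v‖ ^ 2 := real_inner_self_eq_norm_sq _
  by_cases hz : ‖A v‖ = 0
  · rw [hz]; positivity
  · have hpos : 0 < ‖A v‖ := lt_of_le_of_ne (norm_nonneg _) (Ne.symm hz)
    have h2 := hub v
    have h3 := hub (A v)
    have h4 := hpsd v
    have h5 := hpsd (A v)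
    rw [e1] at h1
    have h6 : ⟪A v, v⟫ * ⟪A (A v), A v⟫ ≤ (C * ‖v‖ ^ 2) * (C * ‖A v‖ ^ 2) := by
      apply mul_le_mul h2 h3 h5 (by positivity)
    have hb : 0 ≤ C * ‖v‖ := by positivity
    by_contra hcon
    push_neg at hcon
    have hsq : (C * ‖v‖) ^ 2 < ‖A v‖ ^ 2 := by nlinarith
    nlinarith [mul_pos hpos hpos, h1, h6, hsq]

end Aux

/-- Key one-step inequality for the regularized Newton step. -/
lemma newton_step_bound {m : ℕ} (F : EuclideanSpace ℝ (Fin m) → ℝ) (μ L ζ η : ℝ)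
    (hμ : 0 < μ) (hμL : μ ≤ L) (hmz : 0 < μ + ζ) (hLz : 0 < L + ζ)
    (hη : η = (μ + ζ) * μ / (2 * L ^ 2))
    (hc2 : ContDiff ℝ 2 F)
    (hstr : ∀ x y, F y + ⟪gradient F y, x - y⟫ + μ / 2 * ‖x - y‖ ^ 2 ≤ F x)
    (hsm : ∀ x y, F x ≤ F y + ⟪gradient F y, x - y⟫ + L / 2 * ‖x - y‖ ^ 2)
    (hLow : ∀ x v, μ * ‖v‖ ^ 2 ≤ ⟪fderiv ℝ (gradient F) x v, v⟫)
    (hUpp : ∀ x v, ⟪fderiv ℝ (gradient F) x v, v⟫ ≤ L * ‖v‖ ^ 2)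
    (S X : EuclideanSpace ℝ (Fin m)) (hminS : ∀ y, F S ≤ F y) :
    F X - F S ≤ L ^ 2 / μ * ((1 - μ ^ 2 / (4 * L ^ 2) + μ * (L - μ) / (L * (L + ζ))) * ‖X - S‖ ^ 2
      - ‖(X - η • (Ring.inverse
          (fderiv ℝ (gradient F) X + ζ • ContinuousLinearMap.id ℝ (EuclideanSpace ℝ (Fin m)))
          : EuclideanSpace ℝ (Fin m) →L[ℝ] EuclideanSpace ℝ (Fin m)) (gradient F X)) - S‖ ^ 2) := by
  have hL : 0 < L := lt_of_lt_of_le hμ hμL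
  have hL0 : L ≠ 0 := ne_of_gt hL
  -- differentiability facts
  have hdF : Differentiable ℝ F := hc2.differentiable (by norm_num)
  have hfd : ContDiff ℝ 1 (fderiv ℝ F) := hc2.fderiv_right (by norm_num)
  have hdfd : Differentiable ℝ (fderiv ℝ F) := hfd.differentiable one_ne_zero
  -- gradient as a composition with the dual isometry
  let T : StrongDual ℝ (EuclideanSpace ℝ (Fin m)) →L[ℝ] EuclideanSpace ℝ (Fin m) :=
    { toFun := ⇑(InnerProductSpace.toDual ℝ (EuclideanSpace ℝ (Fin m))).symm,
      map_add' := fun a b => by simp,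
      map_smul' := fun r a => by
        simp [LinearIsometryEquiv.map_smulₛₗ, starRingEnd_apply, star_trivial],
      cont := (InnerProductSpace.toDual ℝ (EuclideanSpace ℝ (Fin m))).symm.continuous }
  have hTapp : ∀ (φ : StrongDual ℝ (EuclideanSpace ℝ (Fin m)))
      (v : EuclideanSpace ℝ (Fin m)), ⟪T φ, v⟫ = φ v := fun φ v =>
    InnerProductSpace.toDual_symm_apply
  have hgradeq : gradient F = ⇑T ∘ (fderiv ℝ F) := rfl
  clear_value T
  have hgraddiff : Differentiable ℝ (gradient F) := by
    rw [hgradeq]; exact T.differentiable.comp hdfd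
  have hfg : ∀ z, fderiv ℝ (gradient F) z = T.comp (fderiv ℝ (fderiv ℝ F) z) := by
    intro z
    rw [hgradeq, fderiv_comp z T.differentiableAt (hdfd z), ContinuousLinearMap.fderiv]
  have hinner_grad : ∀ z u v, ⟪fderiv ℝ (gradient F) z u, v⟫ = fderiv ℝ (fderiv ℝ F) z u v := by
    intro z u v
    rw [hfg z]
    simp only [ContinuousLinearMap.coe_comp', Function.comp_apply]
    exact hTapp _ v
  have hsym2 : ∀ z (u v : EuclideanSpace ℝ (Fin m)),
      ⟪fderiv ℝ (gradient F) z u, v⟫ = ⟪fderiv ℝ (gradient F) z v, u⟫ := by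
    intro z u v
    rw [hinner_grad, hinner_grad]
    exact second_derivative_symmetric (fun y => (hdF y).hasFDerivAt) (hdfd z).hasFDerivAt u v
  have hHnorm : ∀ z, ‖fderiv ℝ (gradient F) z‖ ≤ L := by
    intro z
    refine ContinuousLinearMap.opNorm_le_bound _ (le_of_lt hL) ?_
    intro v
    exact psd_norm_apply_le _ L (hsym2 z)
      (fun w => le_trans (by positivity) (hLow z w)) (hUpp z) hL.le v
  have hglip : ∀ z w : EuclideanSpace ℝ (Fin m),
      ‖gradient F z - gradient F w‖ ≤ L * ‖z - w‖ := by
    intro z w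
    exact convex_univ.norm_image_sub_le_of_norm_fderiv_le
      (fun y _ => hgraddiff y)
      (fun y _ => hHnorm y) (Set.mem_univ w) (Set.mem_univ z)
  -- gradient vanishes at the minimizer
  have hgradmin : gradient F S = 0 := by
    by_contra hne
    have hpos : 0 < ‖gradient F S‖ := norm_pos_iff.mpr hne
    have h1 := hsm (S - (1 / L) • gradient F S) S
    have h2 := hminS (S - (1 / L) • gradient F S)
    have e0 : S - (1 / L) • gradient F S - S = -((1 / L) • gradient F S) := by abel
    rw [e0] at h1
    rw [inner_neg_right, real_inner_smul_right, real_inner_self_eq_norm_sq] at h1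
    rw [norm_neg, norm_smul, Real.norm_eq_abs, abs_of_pos (by positivity : (0:ℝ) < 1 / L)] at h1
    have h3 : F (S - (1 / L) • gradient F S) ≤ F S - 1 / (2 * L) * ‖gradient F S‖ ^ 2 := by
      rw [mul_pow] at h1
      calc F (S - (1 / L) • gradient F S) ≤ _ := h1
      _ = F S - 1 / (2 * L) * ‖gradient F S‖ ^ 2 := by field_simp; ring
    have h4 : 0 < 1 / (2 * L) * ‖gradient F S‖ ^ 2 := by positivity
    linarith
  -- the regularized Hessian and its inverse
  set Hop : EuclideanSpace ℝ (Fin m) →L[ℝ] EuclideanSpace ℝ (Fin m) :=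
    fderiv ℝ (gradient F) X + ζ • ContinuousLinearMap.id ℝ (EuclideanSpace ℝ (Fin m)) with hHop
  set Aop : EuclideanSpace ℝ (Fin m) →L[ℝ] EuclideanSpace ℝ (Fin m) :=
    Ring.inverse Hop with hAop
  clear_value Aop
  have happly : ∀ v : EuclideanSpace ℝ (Fin m),
      Hop v = fderiv ℝ (gradient F) X v + ζ • v := by
    intro v
    rw [hHop]
    simp [ContinuousLinearMap.add_apply, ContinuousLinearMap.smul_apply]
  clear_value Hop
  have hopLow : ∀ v : EuclideanSpace ℝ (Fin m), (μ + ζ) * ‖v‖ ^ 2 ≤ ⟪Hop v, v⟫ := by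
    intro v
    rw [happly v, inner_add_left, real_inner_smul_left, real_inner_self_eq_norm_sq]
    have := hLow X v
    linarith only [this]
  have hopUpp : ∀ v : EuclideanSpace ℝ (Fin m), ⟪Hop v, v⟫ ≤ (L + ζ) * ‖v‖ ^ 2 := by
    intro v
    rw [happly v, inner_add_left, real_inner_smul_left, real_inner_self_eq_norm_sq]
    have := hUpp X v
    linarith only [this]
  have hopsym : ∀ u v : EuclideanSpace ℝ (Fin m), ⟪Hop u, v⟫ = ⟪Hop v, u⟫ := by
    intro u v
    rw [happly u, happly v, inner_add_left, inner_add_left, real_inner_smul_left,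
      real_inner_smul_left, hsym2 X u v, real_inner_comm u v]
  have hoppsd : ∀ w : EuclideanSpace ℝ (Fin m), 0 ≤ ⟪Hop w, w⟫ := fun w =>
    le_trans (by positivity) (hopLow w)
  have hinj : Function.Injective Hop := by
    intro a b hab
    have h0 : Hop (a - b) = 0 := by rw [map_sub, hab, sub_self]
    have h1 := hopLow (a - b)
    rw [h0, inner_zero_left] at h1
    have h2 : ‖a - b‖ ^ 2 ≤ 0 := by nlinarith only [h1, hmz, sq_nonneg ‖a - b‖]
    have h3 : ‖a - b‖ ^ 2 = 0 := le_antisymm h2 (sq_nonneg _)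
    have h4 : ‖a - b‖ = 0 := by
      exact pow_eq_zero_iff (by norm_num) |>.mp h3
    exact sub_eq_zero.mp (norm_eq_zero.mp h4)
  have hsurj : Function.Surjective Hop := by
    have h := (LinearMap.injective_iff_surjective
      (f := (Hop : EuclideanSpace ℝ (Fin m) →ₗ[ℝ] EuclideanSpace ℝ (Fin m)))).mp
      (by simpa using hinj)
    simpa using h
  have hunit : IsUnit Hop := ContinuousLinearMap.isUnit_iff_bijective.mpr ⟨hinj, hsurj⟩
  have hHA : ∀ v, Hop (Aop v) = v := by
    intro v
    have h := Ring.mul_inverse_cancel Hop hunit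
    calc Hop (Aop v) = (Hop * Ring.inverse Hop) v := by
          rw [hAop, ContinuousLinearMap.mul_apply]
    _ = v := by rw [h, ContinuousLinearMap.one_apply]
  have hAsym : ∀ u v, ⟪Aop u, v⟫ = ⟪Aop v, u⟫ := by
    intro u v
    have e1 : ⟪Aop u, v⟫ = ⟪Aop u, Hop (Aop v)⟫ := by rw [hHA]
    rw [e1, real_inner_comm, hopsym, hHA, real_inner_comm]
  have hApsd : ∀ v, 0 ≤ ⟪Aop v, v⟫ := by
    intro v
    have e : ⟪Aop v, v⟫ = ⟪Aop v, Hop (Aop v)⟫ := by rw [hHA]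
    rw [e, real_inner_comm]
    exact hoppsd (Aop v)
  have hAub : ∀ v, (μ + ζ) * ⟪Aop v, v⟫ ≤ ‖v‖ ^ 2 := by
    intro v
    have hw : Hop (Aop v) = v := hHA v
    have h1 : (0:ℝ) ≤ ‖v - (μ + ζ) • Aop v‖ ^ 2 := sq_nonneg _
    rw [norm_sub_sq_real, real_inner_smul_right, norm_smul, Real.norm_eq_abs,
        abs_of_pos hmz, mul_pow] at h1
    have h2 : (μ + ζ) * ‖Aop v‖ ^ 2 ≤ ⟪v, Aop v⟫ := by
      have h := hopLow (Aop v)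
      rw [hw] at h
      exact h
    have h2s := mul_le_mul_of_nonneg_left h2 hmz.le
    have e2 : (μ + ζ) * ⟪Aop v, v⟫ = (μ + ζ) * ⟪v, Aop v⟫ := by rw [real_inner_comm]
    linarith only [h1, h2s, e2]
  have hAlb : ∀ v, ‖v‖ ^ 2 ≤ (L + ζ) * ⟪Aop v, v⟫ := by
    intro v
    by_cases hv : v = 0
    · simp [hv]
    · have hw : Hop (Aop v) = v := hHA v
      have cs := psd_inner_sq_le Hop hopsym hoppsd (Aop v) v
      rw [hw] at cs
      rw [real_inner_self_eq_norm_sq] at cs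
      have h2 := hopUpp v
      have h3 : 0 ≤ ⟪v, Aop v⟫ := by rw [real_inner_comm]; exact hApsd v
      have h4 : 0 < ‖v‖ ^ 2 := pow_pos (norm_pos_iff.mpr hv) 2
      have e2 : ⟪v, Aop v⟫ = ⟪Aop v, v⟫ := real_inner_comm _ _
      have c1 : ⟪v, Aop v⟫ * ⟪Hop v, v⟫ ≤ ⟪v, Aop v⟫ * ((L + ζ) * ‖v‖ ^ 2) :=
        mul_le_mul_of_nonneg_left h2 h3
      have c2 : ‖v‖ ^ 2 * ‖v‖ ^ 2 ≤ ((L + ζ) * ⟪Aop v, v⟫) * ‖v‖ ^ 2 := by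
        rw [← e2]; linarith only [cs, c1]
      exact le_of_mul_le_mul_right c2 h4
  have hAnorm : ∀ v, ‖Aop v‖ ≤ 1 / (μ + ζ) * ‖v‖ := by
    refine psd_norm_apply_le Aop (1 / (μ + ζ)) hAsym hApsd ?_ (by positivity)
    intro w
    rw [one_div, inv_mul_eq_div, le_div_iff₀ hmz]
    linarith [hAub w]
  -- the deviation operator B
  set Bop : EuclideanSpace ℝ (Fin m) →L[ℝ] EuclideanSpace ℝ (Fin m) :=
    ContinuousLinearMap.id ℝ (EuclideanSpace ℝ (Fin m)) - (μ + ζ) • Aop with hBop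
  clear_value Bop
  have hBapp : ∀ v, Bop v = v - (μ + ζ) • Aop v := by
    intro v
    rw [hBop]
    simp [ContinuousLinearMap.sub_apply, ContinuousLinearMap.smul_apply]
  have hBinner : ∀ u v, ⟪Bop u, v⟫ = ⟪u, v⟫ - (μ + ζ) * ⟪Aop u, v⟫ := by
    intro u v
    rw [hBapp, inner_sub_left, real_inner_smul_left]
  have hBsym : ∀ u v, ⟪Bop u, v⟫ = ⟪Bop v, u⟫ := by
    intro u v
    rw [hBinner, hBinner, hAsym u v, real_inner_comm u v]
  have hBpsd : ∀ w, 0 ≤ ⟪Bop w, w⟫ := by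
    intro w
    rw [hBinner, real_inner_self_eq_norm_sq]
    linarith [hAub w]
  have hBub : ∀ w, (L + ζ) * ⟪Bop w, w⟫ ≤ (L - μ) * ‖w‖ ^ 2 := by
    intro w
    rw [hBinner, real_inner_self_eq_norm_sq]
    have := mul_le_mul_of_nonneg_left (hAlb w) hmz.le
    linarith only [this]
  -- abbreviations
  set g : EuclideanSpace ℝ (Fin m) := gradient F X with hgdef
  set d : EuclideanSpace ℝ (Fin m) := X - S with hddef
  clear_value g d
  -- Cauchy-Schwarz bound for the B-form cross term
  have hBbound : (L + ζ) * ⟪Bop g, d⟫ ≤ (L - μ) * (‖g‖ * ‖d‖) := by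
    have cs := psd_inner_sq_le Bop hBsym hBpsd g d
    have b1 := hBub g
    have b2 := hBub d
    have p1 := hBpsd g
    have p2 := hBpsd d
    have hmm : ((L + ζ) * ⟪Bop g, g⟫) * ((L + ζ) * ⟪Bop d, d⟫)
        ≤ ((L - μ) * ‖g‖ ^ 2) * ((L - μ) * ‖d‖ ^ 2) :=
      mul_le_mul b1 b2 (mul_nonneg hLz.le p2)
        (mul_nonneg (sub_nonneg.mpr hμL) (sq_nonneg _))
    have h5 : ((L + ζ) * ⟪Bop g, d⟫) ^ 2 ≤ ((L - μ) * (‖g‖ * ‖d‖)) ^ 2 := by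
      linarith only [mul_le_mul_of_nonneg_left cs (sq_nonneg (L + ζ)), hmm]
    have hb0 : 0 ≤ (L - μ) * (‖g‖ * ‖d‖) :=
      mul_nonneg (sub_nonneg.mpr hμL) (mul_nonneg (norm_nonneg _) (norm_nonneg _))
    nlinarith only [h5, hb0, sq_nonneg ((L + ζ) * ⟪Bop g, d⟫ + (L - μ) * (‖g‖ * ‖d‖))]
  -- strong convexity at X versus the minimizer
  have hstrX := hstr S X
  have eSX : S - X = -d := by rw [hddef]; abel
  rw [eSX, inner_neg_right, norm_neg, ← hgdef] at hstrX
  have hstrineq : F X - F S + μ / 2 * ‖d‖ ^ 2 ≤ ⟪g, d⟫ := by linarith [hstrX]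
  -- Lipschitz bound on the gradient
  have hGlip : ‖g‖ ≤ L * ‖d‖ := by
    have h := hglip X S
    rw [hgradmin, sub_zero, ← hgdef, ← hddef] at h
    exact h
  -- expansion of the squared distance after the step
  have hexp : ‖X - η • Aop g - S‖ ^ 2
      = ‖d‖ ^ 2 - 2 * (η * ⟪Aop g, d⟫) + η ^ 2 * ‖Aop g‖ ^ 2 := by
    have e : X - η • Aop g - S = d - η • Aop g := by rw [hddef]; abel
    rw [e, norm_sub_sq_real, real_inner_smul_right, real_inner_comm, norm_smul,
      Real.norm_eq_abs, mul_pow, sq_abs]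
  -- abstract the scalar quantities
  set ip : ℝ := ⟪g, d⟫ with hipdef
  set ia : ℝ := ⟪Aop g, d⟫ with hiadef
  set ib : ℝ := ⟪Bop g, d⟫ with hibdef
  set na : ℝ := ‖Aop g‖ with hnadef
  set G : ℝ := ‖g‖ with hGdef
  set nd : ℝ := ‖d‖ with hnddef
  set uu : ℝ := ‖X - η • Aop g - S‖ with huudef
  set DF : ℝ := F X - F S with hDFdef
  have hG0 : 0 ≤ G := norm_nonneg _
  have hnd0 : 0 ≤ nd := norm_nonneg _
  have hna0 : 0 ≤ na := norm_nonneg _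
  clear_value ip ia ib na G nd uu DF
  -- scaled scalar inequalities
  have P2 : (L + ζ) * ip - (L - μ) * (G * nd) ≤ (L + ζ) * (μ + ζ) * ia := by
    have hb := hBbound
    have e2 : ib = ip - (μ + ζ) * ia := by
      rw [hibdef, hipdef, hiadef]; exact hBinner g d
    rw [e2] at hb
    linarith only [hb]
  have P3 : (μ + ζ) * na ≤ G := by
    have h := hAnorm g
    rw [← hnadef, ← hGdef] at h
    calc (μ + ζ) * na ≤ (μ + ζ) * (1 / (μ + ζ) * G) :=
          mul_le_mul_of_nonneg_left h hmz.le
    _ = G := by field_simp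
  have P3s : (μ + ζ) ^ 2 * na ^ 2 ≤ G ^ 2 := by
    have h := mul_self_le_mul_self (mul_nonneg hmz.le hna0) P3
    linarith only [h]
  have P5 : G * nd ≤ L * (nd * nd) := by
    have := mul_le_mul_of_nonneg_right hGlip hnd0
    linarith only [this]
  have P4 : G ^ 2 ≤ L ^ 2 * nd ^ 2 := by
    have h2 := mul_self_le_mul_self hG0 hGlip
    linarith only [h2]
  -- final polynomial assembly
  rw [div_mul_eq_mul_div, le_div_iff₀ hμ]
  have hLz0 : L + ζ ≠ 0 := ne_of_gt hLz
  have hexpS : 4 * L ^ 4 * (L + ζ) * uu ^ 2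
      = 4 * L ^ 4 * (L + ζ) * nd ^ 2
        - 4 * L ^ 2 * (L + ζ) * μ * (μ + ζ) * ia
        + μ ^ 2 * (μ + ζ) ^ 2 * (L + ζ) * na ^ 2 := by
    rw [hexp, hη]
    field_simp
    ring
  have elamS : 4 * L ^ 2 * (L + ζ) * (L ^ 2 * ((1 - μ ^ 2 / (4 * L ^ 2)
        + μ * (L - μ) / (L * (L + ζ))) * nd ^ 2 - uu ^ 2))
      = (4 * L ^ 4 * (L + ζ) - μ ^ 2 * L ^ 2 * (L + ζ) + 4 * L ^ 3 * μ * (L - μ)) * nd ^ 2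
        - 4 * L ^ 4 * (L + ζ) * uu ^ 2 := by
    field_simp
  have S1 := mul_le_mul_of_nonneg_left P2 (by positivity : (0:ℝ) ≤ 4 * L ^ 2 * μ)
  have S2 := mul_le_mul_of_nonneg_left hstrineq
    (by positivity : (0:ℝ) ≤ 4 * L ^ 2 * μ * (L + ζ))
  have S3 := mul_le_mul_of_nonneg_left P3s (by positivity : (0:ℝ) ≤ μ ^ 2 * (L + ζ))
  have S4 := mul_le_mul_of_nonneg_left P4 (by positivity : (0:ℝ) ≤ μ ^ 2 * (L + ζ))
  have c5 : (0:ℝ) ≤ 4 * L ^ 2 * μ * (L - μ) :=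
    mul_nonneg (by positivity) (sub_nonneg.mpr hμL)
  have S5 := mul_le_mul_of_nonneg_left P5 c5
  have M : 4 * L ^ 2 * (L + ζ) * (DF * μ)
      ≤ 4 * L ^ 2 * (L + ζ) * (L ^ 2 * ((1 - μ ^ 2 / (4 * L ^ 2)
        + μ * (L - μ) / (L * (L + ζ))) * nd ^ 2 - uu ^ 2)) := by
    rw [elamS]
    linarith only [hexpS, S1, S2, S3, S4, S5]
  exact le_of_mul_le_mul_left M (by positivity)

/-- Corollary: regularized online Newton achieves `O(C*_{2,T})`. -/
theorem regularized_online_newton_dynamic_regret {n : ℕ} (T : ℕ) (hT : 1 ≤ T)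
    (f : ℕ → EuclideanSpace ℝ (Fin n) → ℝ)
    (μ L : ℝ) (hμ : 0 < μ) (hμL : μ ≤ L)
    (xstar : ℕ → EuclideanSpace ℝ (Fin n))
    (hC2 : ∀ t, 1 ≤ t → t ≤ T + 1 → ContDiff ℝ 2 (f t))
    (hstrong : ∀ t, 1 ≤ t → t ≤ T + 1 → ∀ x y,
      f t y + ⟪gradient (f t) y, x - y⟫ + μ / 2 * ‖x - y‖ ^ 2 ≤ f t x)
    (hsmooth : ∀ t, 1 ≤ t → t ≤ T + 1 → ∀ x y,
      f t x ≤ f t y + ⟪gradient (f t) y, x - y⟫ + L / 2 * ‖x - y‖ ^ 2)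
    (hHessLow : ∀ t, 1 ≤ t → t ≤ T + 1 → ∀ x v,
      μ * ‖v‖ ^ 2 ≤ ⟪fderiv ℝ (gradient (f t)) x v, v⟫)
    (hHessUpp : ∀ t, 1 ≤ t → t ≤ T + 1 → ∀ x v,
      ⟪fderiv ℝ (gradient (f t)) x v, v⟫ ≤ L * ‖v‖ ^ 2)
    (hmin : ∀ t, 1 ≤ t → t ≤ T + 1 → ∀ x, f t (xstar t) ≤ f t x)
    (ζ : ℝ) (hζ : ζ > 4 * L ^ 2 * (L - μ) / μ ^ 2 - μ)
    (η : ℝ) (hη : η = (μ + ζ) * μ / (2 * L ^ 2))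
    (x : ℕ → EuclideanSpace ℝ (Fin n))
    (hupdate : ∀ t, 1 ≤ t → t ≤ T →
      x (t + 1) = x t - η • (Ring.inverse
        (fderiv ℝ (gradient (f t)) (x t)
          + ζ • ContinuousLinearMap.id ℝ (EuclideanSpace ℝ (Fin n)))
        : EuclideanSpace ℝ (Fin n) →L[ℝ] EuclideanSpace ℝ (Fin n))
          (gradient (f t) (x t))) :
    (L + ζ) / (μ + ζ) < 1 + μ ^ 2 / (4 * L ^ 2) ∧
    ∑ t ∈ Icc 1 T, (f t (x t) - f t (xstar t)) ≤
      (L ^ 2 / μ) * ((4 * L ^ 2 * (L + ζ) - μ ^ 2 * (μ + ζ)) /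
          (μ ^ 2 * (μ + ζ) - 4 * L ^ 2 * (L + ζ) + 4 * L ^ 2 * (μ + ζ))) *
        ∑ t ∈ Icc 2 (T + 1), ‖xstar t - xstar (t - 1)‖ ^ 2 +
      (L ^ 2 * (L + ζ) / ((μ + ζ) * μ) - μ / 4) * ‖x 1 - xstar 1‖ ^ 2 := by
  have hL : 0 < L := lt_of_lt_of_le hμ hμL
  have hL0 : L ≠ 0 := ne_of_gt hL
  have hμ2 : (0:ℝ) < μ ^ 2 := by positivity
  have hnn : (0:ℝ) ≤ 4 * L ^ 2 * (L - μ) / μ ^ 2 :=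
    div_nonneg (mul_nonneg (by positivity) (sub_nonneg.mpr hμL)) (by positivity)
  have hmz : 0 < μ + ζ := by
    have := hζ
    nlinarith only [hnn, this, hμ]
  have hLz : 0 < L + ζ := by linarith only [hmz, hμL]
  have hkey : 4 * L ^ 2 * (L - μ) < μ ^ 2 * (μ + ζ) := by
    have h := (div_lt_iff₀ hμ2).mp (show 4 * L ^ 2 * (L - μ) / μ ^ 2 < ζ + μ by linarith only [hζ])
    linarith only [h]
  have hD : 0 < μ ^ 2 * (μ + ζ) - 4 * L ^ 2 * (L + ζ) + 4 * L ^ 2 * (μ + ζ) := by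
    linarith only [hkey]
  have hconj : (L + ζ) / (μ + ζ) < 1 + μ ^ 2 / (4 * L ^ 2) := by
    rw [div_lt_iff₀ hmz]
    have h4L : (0:ℝ) < 4 * L ^ 2 := by positivity
    have e : (1 + μ ^ 2 / (4 * L ^ 2)) * (μ + ζ) = (μ + ζ) + μ ^ 2 * (μ + ζ) / (4 * L ^ 2) := by
      ring
    rw [e]
    have h2 : L - μ < μ ^ 2 * (μ + ζ) / (4 * L ^ 2) := by
      rw [lt_div_iff₀ h4L]; linarith only [hkey]
    linarith only [h2]
  refine ⟨hconj, ?_⟩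
  -- contraction factor
  set lam : ℝ := 1 - μ ^ 2 / (4 * L ^ 2) + μ * (L - μ) / (L * (L + ζ)) with hlam
  clear_value lam
  have hlam1 : lam < 1 := by
    rw [hlam]
    have h2 : μ * (L - μ) / (L * (L + ζ)) < μ ^ 2 / (4 * L ^ 2) := by
      rw [div_lt_div_iff₀ (by positivity) (by positivity)]
      have k1 := mul_lt_mul_of_pos_left hkey hμ
      have k2 : μ * (μ ^ 2 * (μ + ζ)) ≤ μ ^ 2 * L * (μ + ζ) := by
        have := mul_le_mul_of_nonneg_right
          (mul_le_mul_of_nonneg_left hμL (by positivity : (0:ℝ) ≤ μ ^ 2)) hmz.le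
        linarith only [this]
      have k3 : μ ^ 2 * L * (μ + ζ) ≤ μ ^ 2 * L * (L + ζ) :=
        mul_le_mul_of_nonneg_left (by linarith only [hμL] : μ + ζ ≤ L + ζ) (by positivity)
      nlinarith only [k1, k2, k3]
    linarith only [h2]
  have hlam0 : 0 < lam := by
    rw [hlam]
    have h1 : μ ^ 2 / (4 * L ^ 2) < 1 := by
      rw [div_lt_one (by positivity)]
      nlinarith only [hμ, hμL, hL]
    have h2 : 0 ≤ μ * (L - μ) / (L * (L + ζ)) :=
      div_nonneg (mul_nonneg hμ.le (sub_nonneg.mpr hμL)) (by positivity)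
    linarith only [h1, h2]
  have h1l : 0 < 1 - lam := by linarith only [hlam1]
  have hcoef : 0 < L ^ 2 / μ := by positivity
  -- per-step inequality combined with Young's inequality
  have key : ∀ t, 1 ≤ t → t ≤ T →
      f t (x t) - f t (xstar t) ≤
        L ^ 2 / μ * (lam * ‖x t - xstar t‖ ^ 2 - lam * ‖x (t + 1) - xstar (t + 1)‖ ^ 2
          + lam / (1 - lam) * ‖xstar (t + 1) - xstar t‖ ^ 2) := by
    intro t ht1 htT
    have htT1 : t ≤ T + 1 := by omega
    have hstep := newton_step_bound (f t) μ L ζ η hμ hμL hmz hLz hη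
      (hC2 t ht1 htT1) (hstrong t ht1 htT1) (hsmooth t ht1 htT1)
      (hHessLow t ht1 htT1) (hHessUpp t ht1 htT1) (xstar t) (x t) (hmin t ht1 htT1)
    rw [← hupdate t ht1 htT, ← hlam] at hstep
    have htri : ‖x (t + 1) - xstar (t + 1)‖
        ≤ ‖x (t + 1) - xstar t‖ + ‖xstar (t + 1) - xstar t‖ := by
      have e : x (t + 1) - xstar (t + 1) = (x (t + 1) - xstar t) - (xstar (t + 1) - xstar t) := by
        abel
      rw [e]; exact norm_sub_le _ _
    have hyoung : lam * ‖x (t + 1) - xstar (t + 1)‖ ^ 2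
        - lam / (1 - lam) * ‖xstar (t + 1) - xstar t‖ ^ 2 ≤ ‖x (t + 1) - xstar t‖ ^ 2 := by
      have h1 : ‖x (t + 1) - xstar (t + 1)‖ ^ 2
          ≤ (‖x (t + 1) - xstar t‖ + ‖xstar (t + 1) - xstar t‖) ^ 2 := by
        have := mul_self_le_mul_self (norm_nonneg _) htri
        linarith only [this]
      have e : ‖x (t + 1) - xstar t‖ ^ 2 + lam / (1 - lam) * ‖xstar (t + 1) - xstar t‖ ^ 2
          - lam * (‖x (t + 1) - xstar t‖ + ‖xstar (t + 1) - xstar t‖) ^ 2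
          = ((1 - lam) * ‖x (t + 1) - xstar t‖ - lam * ‖xstar (t + 1) - xstar t‖) ^ 2
            / (1 - lam) := by
        field_simp
        ring
      have hge : 0 ≤ ((1 - lam) * ‖x (t + 1) - xstar t‖
          - lam * ‖xstar (t + 1) - xstar t‖) ^ 2 / (1 - lam) :=
        div_nonneg (sq_nonneg _) h1l.le
      rw [← e] at hge
      have h3 := mul_le_mul_of_nonneg_left h1 hlam0.le
      linarith only [hge, h3]
    have hmono : lam * ‖x t - xstar t‖ ^ 2 - ‖x (t + 1) - xstar t‖ ^ 2
        ≤ lam * ‖x t - xstar t‖ ^ 2 - lam * ‖x (t + 1) - xstar (t + 1)‖ ^ 2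
          + lam / (1 - lam) * ‖xstar (t + 1) - xstar t‖ ^ 2 := by
      linarith only [hyoung]
    calc f t (x t) - f t (xstar t) ≤ _ := hstep
    _ ≤ _ := mul_le_mul_of_nonneg_left hmono hcoef.le
  -- rewrite the sums over `Icc` as sums over `range`
  have hIcc1 : ∑ t ∈ Icc 1 T, (f t (x t) - f t (xstar t))
      = ∑ i ∈ range T, (f (i + 1) (x (i + 1)) - f (i + 1) (xstar (i + 1))) := by
    rw [← Finset.Ico_add_one_right_eq_Icc, Finset.sum_Ico_eq_sum_range]
    have h' : T + 1 - 1 = T := by omega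
    rw [h']
    exact Finset.sum_congr rfl fun i _ => by rw [Nat.add_comm]
  have hIcc2 : ∑ t ∈ Icc 2 (T + 1), ‖xstar t - xstar (t - 1)‖ ^ 2
      = ∑ i ∈ range T, ‖xstar (i + 1 + 1) - xstar (i + 1)‖ ^ 2 := by
    rw [← Finset.Ico_add_one_right_eq_Icc, Finset.sum_Ico_eq_sum_range]
    have hTT : T + 1 + 1 - 2 = T := by omega
    rw [hTT]
    refine Finset.sum_congr rfl fun i _ => ?_
    have e1 : 2 + i = i + 1 + 1 := by omega
    have e2 : i + 1 + 1 - 1 = i + 1 := by omega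
    rw [e1, e2]
  have tele : ∀ (G : ℕ → ℝ) (M : ℕ), ∑ i ∈ range M, (G i - G (i + 1)) = G 0 - G M := by
    intro G M
    induction M with
    | zero => simp
    | succ k ih => rw [Finset.sum_range_succ, ih]; ring
  rw [hIcc1, hIcc2]
  have hsum1 : ∑ i ∈ range T, (f (i + 1) (x (i + 1)) - f (i + 1) (xstar (i + 1)))
      ≤ ∑ i ∈ range T, (L ^ 2 / μ * (lam * ‖x (i + 1) - xstar (i + 1)‖ ^ 2
          - lam * ‖x (i + 1 + 1) - xstar (i + 1 + 1)‖ ^ 2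
          + lam / (1 - lam) * ‖xstar (i + 1 + 1) - xstar (i + 1)‖ ^ 2)) := by
    refine Finset.sum_le_sum fun i hi => ?_
    exact key (i + 1) (by omega) (by have := Finset.mem_range.mp hi; omega)
  have hsplit : ∑ i ∈ range T, (L ^ 2 / μ * (lam * ‖x (i + 1) - xstar (i + 1)‖ ^ 2
          - lam * ‖x (i + 1 + 1) - xstar (i + 1 + 1)‖ ^ 2
          + lam / (1 - lam) * ‖xstar (i + 1 + 1) - xstar (i + 1)‖ ^ 2))
      = (L ^ 2 / μ * lam) * (‖x 1 - xstar 1‖ ^ 2 - ‖x (T + 1) - xstar (T + 1)‖ ^ 2)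
        + (L ^ 2 / μ * (lam / (1 - lam)))
          * ∑ i ∈ range T, ‖xstar (i + 1 + 1) - xstar (i + 1)‖ ^ 2 := by
    have e : ∀ i : ℕ, L ^ 2 / μ * (lam * ‖x (i + 1) - xstar (i + 1)‖ ^ 2
          - lam * ‖x (i + 1 + 1) - xstar (i + 1 + 1)‖ ^ 2
          + lam / (1 - lam) * ‖xstar (i + 1 + 1) - xstar (i + 1)‖ ^ 2)
        = (L ^ 2 / μ * lam) * (‖x (i + 1) - xstar (i + 1)‖ ^ 2
            - ‖x (i + 1 + 1) - xstar (i + 1 + 1)‖ ^ 2)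
          + (L ^ 2 / μ * (lam / (1 - lam))) * ‖xstar (i + 1 + 1) - xstar (i + 1)‖ ^ 2 :=
      fun i => by ring
    rw [Finset.sum_congr rfl fun i _ => e i, Finset.sum_add_distrib,
      ← Finset.mul_sum, ← Finset.mul_sum,
      tele (fun i => ‖x (i + 1) - xstar (i + 1)‖ ^ 2) T]
  -- the ratio bound
  set rho2 : ℝ := (L + ζ) / (μ + ζ) - μ ^ 2 / (4 * L ^ 2) with hrho2
  clear_value rho2
  have hlamrho : lam ≤ rho2 := by
    rw [hlam, hrho2]
    have h2 : μ * (L - μ) / (L * (L + ζ)) ≤ (L - μ) / (μ + ζ) := by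
      rw [div_le_div_iff₀ (by positivity) hmz]
      have k1 : μ * (L - μ) * (μ + ζ) ≤ L * (L - μ) * (μ + ζ) :=
        mul_le_mul_of_nonneg_right
          (mul_le_mul_of_nonneg_right hμL (sub_nonneg.mpr hμL)) hmz.le
      have k2 : L * (L - μ) * (μ + ζ) ≤ L * (L - μ) * (L + ζ) :=
        mul_le_mul_of_nonneg_left (by linarith only [hμL] : μ + ζ ≤ L + ζ)
          (mul_nonneg hL.le (sub_nonneg.mpr hμL))
      linarith only [k1, k2]
    have e4 : (L + ζ) / (μ + ζ) = 1 + (L - μ) / (μ + ζ) := by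
      field_simp
      ring
    linarith only [h2, e4]
  have hrho2lt1 : rho2 < 1 := by
    rw [hrho2]
    have h4L : (0:ℝ) < 4 * L ^ 2 := by positivity
    have h5 : (L + ζ) / (μ + ζ) < 1 + μ ^ 2 / (4 * L ^ 2) := hconj
    linarith only [h5]
  have hrho2pos : 0 < rho2 := lt_of_lt_of_le hlam0 hlamrho
  have h1r : 0 < 1 - rho2 := by linarith only [hrho2lt1]
  have hratio : lam / (1 - lam) ≤ rho2 / (1 - rho2) := by
    rw [div_le_div_iff₀ h1l h1r]
    nlinarith only [hlamrho]
  have hNeq : 4 * L ^ 2 * (L + ζ) - μ ^ 2 * (μ + ζ) = 4 * L ^ 2 * (μ + ζ) * rho2 := by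
    rw [hrho2]
    field_simp
  have hDeq : μ ^ 2 * (μ + ζ) - 4 * L ^ 2 * (L + ζ) + 4 * L ^ 2 * (μ + ζ)
      = 4 * L ^ 2 * (μ + ζ) * (1 - rho2) := by
    rw [hrho2]
    field_simp
    ring
  have hNform : (4 * L ^ 2 * (L + ζ) - μ ^ 2 * (μ + ζ)) /
      (μ ^ 2 * (μ + ζ) - 4 * L ^ 2 * (L + ζ) + 4 * L ^ 2 * (μ + ζ)) = rho2 / (1 - rho2) := by
    rw [hNeq, hDeq, mul_div_mul_left _ _ (by positivity : (4:ℝ) * L ^ 2 * (μ + ζ) ≠ 0)]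
  -- coefficient comparison for the initial-distance term
  have hc1 : L ^ 2 / μ * lam ≤ L ^ 2 * (L + ζ) / ((μ + ζ) * μ) - μ / 4 := by
    have e : L ^ 2 * (L + ζ) / ((μ + ζ) * μ) - μ / 4 - L ^ 2 / μ * lam
        = L * (L - μ) * (L * (L + ζ) - μ * (μ + ζ)) / (μ * (μ + ζ) * (L + ζ)) := by
      rw [hlam]
      field_simp
      ring
    have hge : 0 ≤ L * (L - μ) * (L * (L + ζ) - μ * (μ + ζ)) / (μ * (μ + ζ) * (L + ζ)) := by
      apply div_nonneg _ (by positivity)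
      apply mul_nonneg (mul_nonneg hL.le (sub_nonneg.mpr hμL))
      nlinarith only [hμL, hmz, hLz, hμ]
    rw [← e] at hge
    linarith only [hge]
  -- put everything together
  have hP0 : 0 ≤ ∑ i ∈ range T, ‖xstar (i + 1 + 1) - xstar (i + 1)‖ ^ 2 :=
    Finset.sum_nonneg fun i _ => sq_nonneg _
  have hS10 : 0 ≤ ‖x 1 - xstar 1‖ ^ 2 := sq_nonneg _
  have hST0 : 0 ≤ ‖x (T + 1) - xstar (T + 1)‖ ^ 2 := sq_nonneg _
  rw [hNform]
  have a1 : 0 ≤ (L ^ 2 / μ * lam) * ‖x (T + 1) - xstar (T + 1)‖ ^ 2 :=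
    mul_nonneg (mul_nonneg hcoef.le hlam0.le) hST0
  have a2 : (L ^ 2 / μ * lam) * ‖x 1 - xstar 1‖ ^ 2
      ≤ (L ^ 2 * (L + ζ) / ((μ + ζ) * μ) - μ / 4) * ‖x 1 - xstar 1‖ ^ 2 :=
    mul_le_mul_of_nonneg_right hc1 hS10
  have a3 : (L ^ 2 / μ * (lam / (1 - lam)))
        * ∑ i ∈ range T, ‖xstar (i + 1 + 1) - xstar (i + 1)‖ ^ 2
      ≤ (L ^ 2 / μ * (rho2 / (1 - rho2)))
        * ∑ i ∈ range T, ‖xstar (i + 1 + 1) - xstar (i + 1)‖ ^ 2 :=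
    mul_le_mul_of_nonneg_right (mul_le_mul_of_nonneg_left hratio hcoef.le) hP0
  calc ∑ i ∈ range T, (f (i + 1) (x (i + 1)) - f (i + 1) (xstar (i + 1)))
      ≤ _ := hsum1
  _ = _ := hsplit
  _ ≤ L ^ 2 / μ * (rho2 / (1 - rho2))
        * ∑ i ∈ range T, ‖xstar (i + 1 + 1) - xstar (i + 1)‖ ^ 2
      + (L ^ 2 * (L + ζ) / ((μ + ζ) * μ) - μ / 4) * ‖x 1 - xstar 1‖ ^ 2 := by
    linarith only [a1, a2, a3]
end

section
/- Let T ≥ 1 and let f_1, …, f_T : ℝ^n → ℝ be twice continuously differentiable, each μ-strongly convex and L-smooth (0 < μ ≤ L), with minimizers x*_t, and suppose: (i) there exists L_H > 0 with ‖∇²f_t(x) − ∇²f_t(y)‖_op ≤ L_H ‖x − y‖ for all x, y and all t; (ii) the sequence (x̂_t) is defined by x̂_0 = x_1 with ‖x_1 − x*_1‖ ≤ μ/L_H and x̂_t = x̂_{t-1} − (∇²f_t(x̂_{t-1}))^{-1} ∇f_t(x̂_{t-1}) for t = 1, …, T; (iii) max_{2 ≤ t ≤ T} ‖x*_t − x*_{t-1}‖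 ≤ μ/(2L_H); and (iv) the played actions are x_1 and x_{t+1} = x̂_t − p_{t+1} for arbitrary prediction vectors p_2, …, p_T ∈ ℝ^n (where p_t is the predicted Newton step M_t^{-1}(x̂_{t-1}) m_t(x̂_{t-1})). Let c_1, c_2 > 0 be any constants with ρ' := (1/16)(1+c_1)²(1+c_2) < 1 and set ρ'' := (L_H/(2μ))²(1+1/c_1)²(1+1/c_2) and D'_T := Σ_{t=2}^T ‖p_t − (∇²f_t(x̂_{t-1}))^{-1} ∇f_t(x̂_{t-1})‖². Then Σ_{t=1}^T (f_t(x_t) − f_t(x*_t)) ≤ L·[ (‖x̂_1 − x*_1‖² − ρ'‖x̂_T − x*_T‖²)/(1 − ρ') + (ρ''/(1 − ρ'))·Σ_{t=2}^T ‖x*_t − x*_{t-1}‖⁴ ] + L·D'_T + L·‖(∇²f_1(x̂_0))^{-1} ∇f_1(x̂_0)‖². -/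
open Finset
open scoped RealInnerProductSpace


open scoped RealInnerProductSpace Topology

namespace OONAux

variable {n : ℕ}

theorem grad_min_zero (f : EuclideanSpace ℝ (Fin n) → ℝ) (L : ℝ) (hL : 0 < L)
    (y : EuclideanSpace ℝ (Fin n))
    (hs : ∀ x, f x ≤ f y + ⟪gradient f y, x - y⟫ + L / 2 * ‖x - y‖ ^ 2)
    (hm : ∀ x, f y ≤ f x) : gradient f y = 0 := by
  set G := gradient f y
  have h := hs (y - L⁻¹ • G)
  have h2 := hm (y - L⁻¹ • G)
  rw [sub_sub_cancel_left] at h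
  rw [inner_neg_right, real_inner_smul_right, real_inner_self_eq_norm_sq, norm_neg, norm_smul,
    Real.norm_eq_abs, abs_of_pos (by positivity : (0:ℝ) < L⁻¹)] at h
  have key : L⁻¹ * ‖G‖ ^ 2 ≤ L / 2 * (L⁻¹ * ‖G‖) ^ 2 := by linarith
  have h3 : L / 2 * (L⁻¹ * ‖G‖) ^ 2 = L⁻¹ / 2 * ‖G‖ ^ 2 := by
    field_simp
  rw [h3] at key
  have hq : ‖G‖ ^ 2 ≤ 0 := by nlinarith [inv_pos.mpr hL]
  have : ‖G‖ = 0 := by nlinarith [sq_nonneg ‖G‖, norm_nonneg G]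
  simpa [G] using norm_eq_zero.mp this

theorem grad_lower (f : EuclideanSpace ℝ (Fin n) → ℝ) (μ : ℝ) (hμ : 0 < μ)
    (hstrong : ∀ x y, f y + ⟪gradient f y, x - y⟫ + μ / 2 * ‖x - y‖ ^ 2 ≤ f x)
    (x y : EuclideanSpace ℝ (Fin n)) :
    μ * ‖x - y‖ ≤ ‖gradient f x - gradient f y‖ := by
  have h1 := hstrong x y
  have h2 := hstrong y x
  have hn : ‖y - x‖ = ‖x - y‖ := norm_sub_rev _ _
  have hmono : μ * ‖x - y‖ ^ 2 ≤ ⟪gradient f x - gradient f y, x - y⟫ := by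
    rw [inner_sub_left]
    have e1 : ⟪gradient f x, y - x⟫ = -⟪gradient f x, x - y⟫ := by
      rw [← inner_neg_right]; congr 1; abel
    rw [e1, hn] at h2
    linarith
  have hcs : ⟪gradient f x - gradient f y, x - y⟫ ≤ ‖gradient f x - gradient f y‖ * ‖x - y‖ :=
    real_inner_le_norm _ _
  rcases eq_or_ne x y with h | h
  · simp [h]
  · have hpos : 0 < ‖x - y‖ := by
      simpa [sub_eq_zero] using h
    nlinarith

theorem hess_lower (g : EuclideanSpace ℝ (Fin n) → EuclideanSpace ℝ (Fin n)) (μ : ℝ)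
    (hg : Differentiable ℝ g)
    (hlow : ∀ x y, μ * ‖x - y‖ ≤ ‖g x - g y‖)
    (x v : EuclideanSpace ℝ (Fin n)) : μ * ‖v‖ ≤ ‖fderiv ℝ g x v‖ := by
  set H := fderiv ℝ g x
  have hc : ∀ s : ℝ, HasDerivAt (fun s : ℝ => x + s • v) v s := by
    intro s
    simpa using ((hasDerivAt_id s).smul_const v).const_add x
  have hφ : HasDerivAt (fun s : ℝ => g (x + s • v)) (H v) 0 := by
    have := (hg (x + (0:ℝ) • v)).hasFDerivAt.comp_hasDerivAt 0 (hc 0)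
    simp only [zero_smul, add_zero] at this
    exact this
  have hsl := hasDerivAt_iff_tendsto_slope.mp hφ
  have hsl' : Filter.Tendsto (fun s => ‖slope (fun s : ℝ => g (x + s • v)) 0 s‖)
      (𝓝[>] (0:ℝ)) (𝓝 ‖H v‖) :=
    (hsl.mono_left (nhdsWithin_mono _ (fun s hs => ne_of_gt hs))).norm
  refine ge_of_tendsto hsl' ?_
  filter_upwards [self_mem_nhdsWithin] with s hs
  have hs' : (0:ℝ) < s := hs
  have h1 := hlow (x + s • v) x
  rw [add_sub_cancel_left, norm_smul, Real.norm_eq_abs, abs_of_pos hs'] at h1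
  simp only [slope, vsub_eq_sub, sub_zero, zero_smul, add_zero]
  rw [norm_smul, Real.norm_eq_abs, abs_of_pos (inv_pos.mpr hs')]
  rw [← mul_le_mul_iff_right₀ hs']
  calc s * (μ * ‖v‖) = μ * (s * ‖v‖) := by ring
    _ ≤ ‖g (x + s • v) - g x‖ := h1
    _ = s * (s⁻¹ * ‖g (x + s • v) - g x‖) := by
        field_simp

theorem taylor_bound (g : EuclideanSpace ℝ (Fin n) → EuclideanSpace ℝ (Fin n)) (LH : ℝ)
    (hg : Differentiable ℝ g)
    (hlip : ∀ x y, ‖fderiv ℝ g x - fderiv ℝ g y‖ ≤ LH * ‖x - y‖)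
    (x y : EuclideanSpace ℝ (Fin n)) :
    ‖g y - g x - fderiv ℝ g x (y - x)‖ ≤ LH / 2 * ‖y - x‖ ^ 2 := by
  set w := y - x with hw
  set ψ : ℝ → EuclideanSpace ℝ (Fin n) :=
    fun s => g (x + s • w) - g x - s • (fderiv ℝ g x w) with hψ
  have hc : ∀ s : ℝ, HasDerivAt (fun s : ℝ => x + s • w) w s := fun s => by
    simpa using ((hasDerivAt_id s).smul_const w).const_add x
  have hψ' : ∀ s : ℝ, HasDerivAt ψ (fderiv ℝ g (x + s • w) w - fderiv ℝ g x w) s := by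
    intro s
    have h1 : HasDerivAt (fun s : ℝ => g (x + s • w)) (fderiv ℝ g (x + s • w) w) s :=
      (hg (x + s • w)).hasFDerivAt.comp_hasDerivAt s (hc s)
    have h2 := (h1.sub_const (g x)).sub ((hasDerivAt_id s).smul_const (fderiv ℝ g x w))
    simp only [one_smul] at h2
    exact h2
  have hB : ∀ s : ℝ, HasDerivAt (fun s => LH * ‖w‖ ^ 2 * (s ^ 2 / 2)) (LH * ‖w‖ ^ 2 * s) s := by
    intro s
    have := ((hasDerivAt_pow 2 s).div_const 2).const_mul (LH * ‖w‖ ^ 2)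
    simpa using this.congr_deriv (by ring)
  have key : ∀ s ∈ Set.Icc (0:ℝ) 1, ‖ψ s‖ ≤ LH * ‖w‖ ^ 2 * (s ^ 2 / 2) := by
    refine image_norm_le_of_norm_deriv_right_le_deriv_boundary
      (f := ψ) (f' := fun s => fderiv ℝ g (x + s • w) w - fderiv ℝ g x w)
      (fun s _ => ((hψ' s).continuousAt).continuousWithinAt)
      (fun s _ => (hψ' s).hasDerivWithinAt) (by simp [ψ]) hB ?_
    intro s hs
    have h2 : ‖(fderiv ℝ g (x + s • w) - fderiv ℝ g x) w‖ ≤ (LH * ‖s • w‖) * ‖w‖ := by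
      refine le_trans ((fderiv ℝ g (x + s • w) - fderiv ℝ g x).le_opNorm w) ?_
      have := hlip (x + s • w) x
      rw [add_sub_cancel_left] at this
      exact mul_le_mul_of_nonneg_right this (norm_nonneg w)
    rw [norm_smul, Real.norm_eq_abs, abs_of_nonneg hs.1] at h2
    calc ‖fderiv ℝ g (x + s • w) w - fderiv ℝ g x w‖
        = ‖(fderiv ℝ g (x + s • w) - fderiv ℝ g x) w‖ := by
          simp [ContinuousLinearMap.sub_apply]
      _ ≤ LH * (s * ‖w‖) * ‖w‖ := h2
      _ = LH * ‖w‖ ^ 2 * s := by ring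
  have h1 := key 1 (by norm_num)
  have he : LH * ‖w‖ ^ 2 * ((1:ℝ) ^ 2 / 2) = LH / 2 * ‖y - x‖ ^ 2 := by rw [hw]; ring
  rw [he] at h1
  simpa [ψ, hw] using h1

theorem isUnit_of_lower (A : (EuclideanSpace ℝ (Fin n)) →L[ℝ] (EuclideanSpace ℝ (Fin n)))
    (μ : ℝ) (hμ : 0 < μ) (h : ∀ v, μ * ‖v‖ ≤ ‖A v‖) : IsUnit A := by
  rw [ContinuousLinearMap.isUnit_iff_bijective]
  have hinj : Function.Injective A := by
    intro u v huv
    have := h (u - v)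
    rw [map_sub, huv, sub_self, norm_zero] at this
    have : ‖u - v‖ ≤ 0 := by nlinarith [norm_nonneg (u - v)]
    rwa [← sub_eq_zero, ← norm_le_zero_iff]
  exact ⟨hinj, LinearMap.injective_iff_surjective.mp hinj⟩

theorem inverse_cancel (A : (EuclideanSpace ℝ (Fin n)) →L[ℝ] (EuclideanSpace ℝ (Fin n)))
    (hu : IsUnit A) (z : EuclideanSpace ℝ (Fin n)) : Ring.inverse A (A z) = z := by
  have h := Ring.inverse_mul_cancel A hu
  calc Ring.inverse A (A z) = (Ring.inverse A * A) z := rfl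
    _ = z := by rw [h]; rfl

theorem inverse_bound (A : (EuclideanSpace ℝ (Fin n)) →L[ℝ] (EuclideanSpace ℝ (Fin n)))
    (μ : ℝ) (hμ : 0 < μ) (h : ∀ v, μ * ‖v‖ ≤ ‖A v‖) (w : EuclideanSpace ℝ (Fin n)) :
    ‖Ring.inverse A w‖ ≤ μ⁻¹ * ‖w‖ := by
  have hu := isUnit_of_lower A μ hμ h
  have hc : A (Ring.inverse A w) = w := by
    have h2 := Ring.mul_inverse_cancel A hu
    calc A (Ring.inverse A w) = (A * Ring.inverse A) w := rfl
      _ = w := by rw [h2]; rfl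
  have h3 := h (Ring.inverse A w)
  rw [hc] at h3
  rw [← mul_le_mul_iff_right₀ hμ]
  calc μ * ‖Ring.inverse A w‖ ≤ ‖w‖ := h3
    _ = μ * (μ⁻¹ * ‖w‖) := by field_simp

theorem grad_contDiff (f : EuclideanSpace ℝ (Fin n) → ℝ) (hC2 : ContDiff ℝ 2 f) :
    ContDiff ℝ 1 (gradient f) := by
  have h1 : ContDiff ℝ 1 (fderiv ℝ f) := hC2.fderiv_right (by norm_num)
  have h2 : gradient f = fun x => (InnerProductSpace.toDual ℝ _).symm (fderiv ℝ f x) := rfl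
  rw [h2]
  exact (InnerProductSpace.toDual ℝ _).symm.contDiff.comp h1

theorem newton_step (f : EuclideanSpace ℝ (Fin n) → ℝ) (μ LH : ℝ)
    (hμ : 0 < μ)
    (hC2 : ContDiff ℝ 2 f)
    (hstrong : ∀ x y, f y + ⟪gradient f y, x - y⟫ + μ / 2 * ‖x - y‖ ^ 2 ≤ f x)
    (hlip : ∀ x y, ‖fderiv ℝ (gradient f) x - fderiv ℝ (gradient f) y‖ ≤ LH * ‖x - y‖)
    (xs : EuclideanSpace ℝ (Fin n)) (hgs : gradient f xs = 0) (z : EuclideanSpace ℝ (Fin n)) :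
    ‖z - Ring.inverse (fderiv ℝ (gradient f) z) (gradient f z) - xs‖ ≤
      LH / (2 * μ) * ‖z - xs‖ ^ 2 := by
  set g := gradient f with hgdef
  have hgd : Differentiable ℝ g := (grad_contDiff f hC2).differentiable one_ne_zero
  have hlow : ∀ x y, μ * ‖x - y‖ ≤ ‖g x - g y‖ := grad_lower f μ hμ hstrong
  set H := fderiv ℝ g z with hH
  have hHlow : ∀ v, μ * ‖v‖ ≤ ‖H v‖ := fun v => hess_lower g μ hgd hlow z v
  have hu : IsUnit H := isUnit_of_lower H μ hμ hHlow
  have hid : z - Ring.inverse H (g z) - xs = Ring.inverse H (H (z - xs) - g z) := by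
    rw [map_sub, inverse_cancel H hu]
    abel
  rw [hid]
  have htay : ‖g xs - g z - H (xs - z)‖ ≤ LH / 2 * ‖xs - z‖ ^ 2 :=
    taylor_bound g LH hgd hlip z xs
  have heq : H (z - xs) - g z = g xs - g z - H (xs - z) := by
    rw [hgs, show xs - z = -(z - xs) by abel, map_neg]
    abel
  calc ‖Ring.inverse H (H (z - xs) - g z)‖ ≤ μ⁻¹ * ‖H (z - xs) - g z‖ :=
        inverse_bound H μ hμ hHlow _
    _ = μ⁻¹ * ‖g xs - g z - H (xs - z)‖ := by rw [heq]
    _ ≤ μ⁻¹ * (LH / 2 * ‖xs - z‖ ^ 2) :=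
        mul_le_mul_of_nonneg_left htay (by positivity)
    _ = LH / (2 * μ) * ‖z - xs‖ ^ 2 := by
        rw [norm_sub_rev xs z]; ring

end OONAux


theorem sq_add_split (c a b : ℝ) (hc : 0 < c) :
    (a + b) ^ 2 ≤ (1 + c) * a ^ 2 + (1 + 1 / c) * b ^ 2 := by
  have h1 : c * (1 / c) = 1 := by field_simp
  nlinarith [sq_nonneg (c * a - b), sq_nonneg a, sq_nonneg b, mul_pos hc hc]

theorem key_alg (μ LH c1 c2 a b X : ℝ) (hμ : 0 < μ) (hLH : 0 < LH)
    (hc1 : 0 < c1) (hc2 : 0 < c2)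
    (ha0 : 0 ≤ a) (hb0 : 0 ≤ b) (ha : a ≤ μ / (2 * LH)) (hX0 : 0 ≤ X)
    (hX : X ≤ LH / (2 * μ) * (a + b) ^ 2) :
    X ^ 2 ≤ (1 / 16) * (1 + c1) ^ 2 * (1 + c2) * a ^ 2 +
      (LH / (2 * μ)) ^ 2 * (1 + 1 / c1) ^ 2 * (1 + 1 / c2) * b ^ 4 := by
  have hK : (0:ℝ) ≤ LH / (2 * μ) := by positivity
  have h1 : (a + b) ^ 2 ≤ (1 + c1) * a ^ 2 + (1 + 1 / c1) * b ^ 2 := sq_add_split c1 a b hc1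
  have h2 : ((1 + c1) * a ^ 2 + (1 + 1 / c1) * b ^ 2) ^ 2 ≤
      (1 + c2) * ((1 + c1) * a ^ 2) ^ 2 + (1 + 1 / c2) * ((1 + 1 / c1) * b ^ 2) ^ 2 :=
    sq_add_split c2 _ _ hc2
  have hX2 : X ^ 2 ≤ (LH / (2 * μ)) ^ 2 * ((a + b) ^ 2) ^ 2 := by
    calc X ^ 2 ≤ (LH / (2 * μ) * (a + b) ^ 2) ^ 2 := by
          exact pow_le_pow_left₀ hX0 hX 2
      _ = (LH / (2 * μ)) ^ 2 * ((a + b) ^ 2) ^ 2 := by ring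
  have h3 : ((a + b) ^ 2) ^ 2 ≤ ((1 + c1) * a ^ 2 + (1 + 1 / c1) * b ^ 2) ^ 2 :=
    pow_le_pow_left₀ (sq_nonneg _) h1 2
  have ha4 : a ^ 4 ≤ (μ / (2 * LH)) ^ 2 * a ^ 2 := by
    have h4 : a ^ 2 ≤ (μ / (2 * LH)) ^ 2 := by nlinarith
    nlinarith [sq_nonneg a]
  have hc1' : (0:ℝ) ≤ 1 + c1 := by linarith
  have hc2' : (0:ℝ) ≤ 1 + c2 := by linarith
  have hK2 : (0:ℝ) ≤ (LH / (2 * μ)) ^ 2 := by positivity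
  have hmain : X ^ 2 ≤ (LH / (2 * μ)) ^ 2 *
      ((1 + c2) * (1 + c1) ^ 2 * a ^ 4 + (1 + 1 / c2) * (1 + 1 / c1) ^ 2 * b ^ 4) := by
    calc X ^ 2 ≤ (LH / (2 * μ)) ^ 2 * ((a + b) ^ 2) ^ 2 := hX2
      _ ≤ (LH / (2 * μ)) ^ 2 * ((1 + c1) * a ^ 2 + (1 + 1 / c1) * b ^ 2) ^ 2 :=
          mul_le_mul_of_nonneg_left h3 hK2
      _ ≤ (LH / (2 * μ)) ^ 2 *
            ((1 + c2) * ((1 + c1) * a ^ 2) ^ 2 + (1 + 1 / c2) * ((1 + 1 / c1) * b ^ 2) ^ 2) :=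
          mul_le_mul_of_nonneg_left h2 hK2
      _ = (LH / (2 * μ)) ^ 2 *
            ((1 + c2) * (1 + c1) ^ 2 * a ^ 4 + (1 + 1 / c2) * (1 + 1 / c1) ^ 2 * b ^ 4) := by
          ring
  have hfin : (LH / (2 * μ)) ^ 2 * ((1 + c2) * (1 + c1) ^ 2 * a ^ 4) ≤
      (1 / 16) * (1 + c1) ^ 2 * (1 + c2) * a ^ 2 := by
    have h5 : (LH / (2 * μ)) ^ 2 * ((1 + c2) * (1 + c1) ^ 2) * a ^ 4 ≤
        (LH / (2 * μ)) ^ 2 * ((1 + c2) * (1 + c1) ^ 2) * ((μ / (2 * LH)) ^ 2 * a ^ 2) :=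
      mul_le_mul_of_nonneg_left ha4 (by positivity)
    have h6 : (LH / (2 * μ)) ^ 2 * ((1 + c2) * (1 + c1) ^ 2) * ((μ / (2 * LH)) ^ 2 * a ^ 2) =
        (1 / 16) * (1 + c1) ^ 2 * (1 + c2) * a ^ 2 := by
      field_simp
      ring
    calc (LH / (2 * μ)) ^ 2 * ((1 + c2) * (1 + c1) ^ 2 * a ^ 4)
        = (LH / (2 * μ)) ^ 2 * ((1 + c2) * (1 + c1) ^ 2) * a ^ 4 := by ring
      _ ≤ _ := h5
      _ = _ := h6
  calc X ^ 2 ≤ (LH / (2 * μ)) ^ 2 * ((1 + c2) * (1 + c1) ^ 2 * a ^ 4) +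
        (LH / (2 * μ)) ^ 2 * ((1 + 1 / c2) * (1 + 1 / c1) ^ 2 * b ^ 4) := by linarith
    _ ≤ (1 / 16) * (1 + c1) ^ 2 * (1 + c2) * a ^ 2 +
        (LH / (2 * μ)) ^ 2 * (1 + 1 / c1) ^ 2 * (1 + 1 / c2) * b ^ 4 := by
        have : (LH / (2 * μ)) ^ 2 * ((1 + 1 / c2) * (1 + 1 / c1) ^ 2 * b ^ 4) =
            (LH / (2 * μ)) ^ 2 * (1 + 1 / c1) ^ 2 * (1 + 1 / c2) * b ^ 4 := by ring
        linarith [hfin]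

namespace OONAux

theorem norm_add_sq_le' {n : ℕ} (u v : EuclideanSpace ℝ (Fin n)) :
    ‖u + v‖ ^ 2 ≤ 2 * ‖u‖ ^ 2 + 2 * ‖v‖ ^ 2 := by
  have h := norm_add_le u v
  nlinarith [sq_nonneg (‖u‖ - ‖v‖), norm_nonneg u, norm_nonneg v, norm_nonneg (u + v)]

end OONAux

set_option maxHeartbeats 1000000

/-- Theorem 2: dynamic regret of optimistic online Newton. -/
theorem oon_dynamic_regret {n : ℕ} (T : ℕ) (hT : 1 ≤ T)
    (f : ℕ → EuclideanSpace ℝ (Fin n) → ℝ)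
    (μ L LH : ℝ) (hμ : 0 < μ) (hμL : μ ≤ L) (hLH : 0 < LH)
    (xstar : ℕ → EuclideanSpace ℝ (Fin n))
    (hC2 : ∀ t, 1 ≤ t → t ≤ T → ContDiff ℝ 2 (f t))
    (hstrong : ∀ t, 1 ≤ t → t ≤ T → ∀ x y,
      f t y + ⟪gradient (f t) y, x - y⟫ + μ / 2 * ‖x - y‖ ^ 2 ≤ f t x)
    (hsmooth : ∀ t, 1 ≤ t → t ≤ T → ∀ x y,
      f t x ≤ f t y + ⟪gradient (f t) y, x - y⟫ + L / 2 * ‖x - y‖ ^ 2)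
    (hmin : ∀ t, 1 ≤ t → t ≤ T → ∀ x, f t (xstar t) ≤ f t x)
    (hHessLip : ∀ t, 1 ≤ t → t ≤ T → ∀ x y,
      ‖fderiv ℝ (gradient (f t)) x - fderiv ℝ (gradient (f t)) y‖ ≤ LH * ‖x - y‖)
    (xhat x p : ℕ → EuclideanSpace ℝ (Fin n))
    (hxhat0 : xhat 0 = x 1)
    (hinit : ‖x 1 - xstar 1‖ ≤ μ / LH)
    (hxhat : ∀ t, 1 ≤ t → t ≤ T →
      xhat t = xhat (t - 1) -
        Ring.inverse (fderiv ℝ (gradient (f t)) (xhat (t - 1)))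
          (gradient (f t) (xhat (t - 1))))
    (hpath : ∀ t, 2 ≤ t → t ≤ T → ‖xstar t - xstar (t - 1)‖ ≤ μ / (2 * LH))
    (hplay : ∀ t, 1 ≤ t → t + 1 ≤ T → x (t + 1) = xhat t - p (t + 1))
    (c1 c2 ρ' ρ'' : ℝ) (hc1 : 0 < c1) (hc2 : 0 < c2)
    (hρ' : ρ' = (1 / 16) * (1 + c1) ^ 2 * (1 + c2)) (hρ'lt : ρ' < 1)
    (hρ'' : ρ'' = (LH / (2 * μ)) ^ 2 * (1 + 1 / c1) ^ 2 * (1 + 1 / c2)) :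
    ∑ t ∈ Icc 1 T, (f t (x t) - f t (xstar t)) ≤
      L * ((‖xhat 1 - xstar 1‖ ^ 2 - ρ' * ‖xhat T - xstar T‖ ^ 2) / (1 - ρ') +
          ρ'' / (1 - ρ') * ∑ t ∈ Icc 2 T, ‖xstar t - xstar (t - 1)‖ ^ 4) +
      L * ∑ t ∈ Icc 2 T,
        ‖p t - Ring.inverse (fderiv ℝ (gradient (f t)) (xhat (t - 1)))
            (gradient (f t) (xhat (t - 1)))‖ ^ 2 +
      L * ‖Ring.inverse (fderiv ℝ (gradient (f 1)) (xhat 0))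
            (gradient (f 1) (xhat 0))‖ ^ 2 := by
  have hL : 0 < L := lt_of_lt_of_le hμ hμL
  have hρpos : 0 < 1 - ρ' := by linarith
  -- gradient vanishes at minimizers
  have hgz : ∀ t, 1 ≤ t → t ≤ T → gradient (f t) (xstar t) = 0 := fun t h1 h2 =>
    OONAux.grad_min_zero (f t) L hL (xstar t) (fun z => hsmooth t h1 h2 z (xstar t))
      (hmin t h1 h2)
  -- Newton contraction step
  have hstep : ∀ t, 1 ≤ t → t ≤ T →
      ‖xhat t - xstar t‖ ≤ LH / (2 * μ) * ‖xhat (t - 1) - xstar t‖ ^ 2 := by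
    intro t h1 h2
    rw [hxhat t h1 h2]
    exact OONAux.newton_step (f t) μ LH hμ (hC2 t h1 h2)
      (fun a b => hstrong t h1 h2 a b) (hHessLip t h1 h2) (xstar t) (hgz t h1 h2)
      (xhat (t - 1))
  have hquad : ∀ d : ℝ, 0 ≤ d → d ≤ μ / LH → LH / (2 * μ) * d ^ 2 ≤ μ / (2 * LH) := by
    intro d h0 h1
    have h2 : d ^ 2 ≤ (μ / LH) ^ 2 := by nlinarith
    calc LH / (2 * μ) * d ^ 2 ≤ LH / (2 * μ) * (μ / LH) ^ 2 :=
        mul_le_mul_of_nonneg_left h2 (by positivity)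
      _ = μ / (2 * LH) := by field_simp
  have hhalf : μ / (2 * LH) + μ / (2 * LH) = μ / LH := by field_simp; ring
  -- invariant: stay in the basin
  have hinv : ∀ t, 1 ≤ t → t ≤ T → ‖xhat t - xstar t‖ ≤ μ / (2 * LH) := by
    intro t
    induction t with
    | zero => intro h1 _; exact absurd h1 (by omega)
    | succ k ih =>
      intro _ hkT
      have hb : ‖xhat k - xstar (k + 1)‖ ≤ μ / LH := by
        rcases Nat.eq_zero_or_pos k with hk | hk
        · subst hk
          rw [hxhat0]
          simpa using hinit
        · have ha := ih hk (by omega)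
          have hp := hpath (k + 1) (by omega) hkT
          simp only [Nat.add_sub_cancel] at hp
          calc ‖xhat k - xstar (k + 1)‖
              = ‖(xhat k - xstar k) - (xstar (k + 1) - xstar k)‖ := by
                congr 1; abel
            _ ≤ ‖xhat k - xstar k‖ + ‖xstar (k + 1) - xstar k‖ := norm_sub_le _ _
            _ ≤ μ / (2 * LH) + μ / (2 * LH) := add_le_add ha hp
            _ = μ / LH := hhalf
      have hs := hstep (k + 1) (by omega) hkT
      simp only [Nat.add_sub_cancel] at hs
      exact le_trans hs (hquad _ (norm_nonneg _) hb)
  -- one-step recursion for squared distances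
  have hrec : ∀ t, 2 ≤ t → t ≤ T →
      ‖xhat t - xstar t‖ ^ 2 ≤ ρ' * ‖xhat (t - 1) - xstar (t - 1)‖ ^ 2 +
        ρ'' * ‖xstar t - xstar (t - 1)‖ ^ 4 := by
    intro t h2 hT'
    have h1 : 1 ≤ t := by omega
    have hs := hstep t h1 hT'
    have htri : ‖xhat (t - 1) - xstar t‖ ≤
        ‖xhat (t - 1) - xstar (t - 1)‖ + ‖xstar t - xstar (t - 1)‖ := by
      calc ‖xhat (t - 1) - xstar t‖
          = ‖(xhat (t - 1) - xstar (t - 1)) - (xstar t - xstar (t - 1))‖ := by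
            congr 1; abel
        _ ≤ _ := norm_sub_le _ _
    have hX : ‖xhat t - xstar t‖ ≤ LH / (2 * μ) *
        (‖xhat (t - 1) - xstar (t - 1)‖ + ‖xstar t - xstar (t - 1)‖) ^ 2 := by
      refine le_trans hs (mul_le_mul_of_nonneg_left ?_ (by positivity))
      exact pow_le_pow_left₀ (norm_nonneg _) htri 2
    have hainv := hinv (t - 1) (by omega) (by omega)
    have hkey := key_alg μ LH c1 c2 ‖xhat (t - 1) - xstar (t - 1)‖
      ‖xstar t - xstar (t - 1)‖ ‖xhat t - xstar t‖ hμ hLH hc1 hc2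
      (norm_nonneg _) (norm_nonneg _) hainv (norm_nonneg _) hX
    rw [hρ', hρ'']
    linarith [hkey]
  -- summed recursion
  have hsum : ∀ m, 1 ≤ m → m ≤ T →
      (∑ t ∈ Icc 1 m, ‖xhat t - xstar t‖ ^ 2) * (1 - ρ') ≤
        ‖xhat 1 - xstar 1‖ ^ 2 - ρ' * ‖xhat m - xstar m‖ ^ 2 +
          ρ'' * ∑ t ∈ Icc 2 m, ‖xstar t - xstar (t - 1)‖ ^ 4 := by
    intro m
    induction m with
    | zero => intro h1 _; exact absurd h1 (by omega)
    | succ k ih =>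
      intro _ hkT
      rcases Nat.eq_zero_or_pos k with hk | hk
      · subst hk
        rw [show Finset.Icc 1 1 = {1} from Finset.Icc_self 1,
          Finset.Icc_eq_empty (by omega : ¬ (2:ℕ) ≤ 0 + 1)]
        simp only [Finset.sum_singleton, Finset.sum_empty]
        linarith
      · have ih' := ih hk (by omega)
        have hr := hrec (k + 1) (by omega) hkT
        simp only [Nat.add_sub_cancel] at hr
        rw [Finset.sum_Icc_succ_top (by omega : 1 ≤ k + 1),
          Finset.sum_Icc_succ_top (by omega : 2 ≤ k + 1)]
        simp only [Nat.add_sub_cancel]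
        linarith [ih', hr]
  -- per-round regret bounds
  have hregb : ∀ t, 1 ≤ t → t ≤ T →
      f t (x t) - f t (xstar t) ≤ L / 2 * ‖x t - xstar t‖ ^ 2 := by
    intro t h1 h2
    have h := hsmooth t h1 h2 (x t) (xstar t)
    rw [hgz t h1 h2] at h
    simp only [inner_zero_left] at h
    linarith
  have h1b : ‖x 1 - xstar 1‖ ^ 2 ≤ 2 * ‖xhat 1 - xstar 1‖ ^ 2 +
      2 * ‖Ring.inverse (fderiv ℝ (gradient (f 1)) (xhat 0))
            (gradient (f 1) (xhat 0))‖ ^ 2 := by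
    have hx1 := hxhat 1 le_rfl hT
    simp only [Nat.sub_self] at hx1
    have he : x 1 - xstar 1 = (xhat 1 - xstar 1) +
        Ring.inverse (fderiv ℝ (gradient (f 1)) (xhat 0)) (gradient (f 1) (xhat 0)) := by
      rw [← hxhat0, hx1]; abel
    rw [he]
    exact OONAux.norm_add_sq_le' _ _
  have htb : ∀ t, 2 ≤ t → t ≤ T →
      ‖x t - xstar t‖ ^ 2 ≤ 2 * ‖xhat t - xstar t‖ ^ 2 +
        2 * ‖p t - Ring.inverse (fderiv ℝ (gradient (f t)) (xhat (t - 1)))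
              (gradient (f t) (xhat (t - 1)))‖ ^ 2 := by
    intro t h2 hT'
    have hp := hplay (t - 1) (by omega) (by omega)
    rw [show t - 1 + 1 = t by omega] at hp
    have hx := hxhat t (by omega) hT'
    have he : x t - xstar t = (xhat t - xstar t) +
        (Ring.inverse (fderiv ℝ (gradient (f t)) (xhat (t - 1)))
            (gradient (f t) (xhat (t - 1))) - p t) := by
      rw [hp, hx]; abel
    rw [he]
    have h3 := OONAux.norm_add_sq_le' (xhat t - xstar t)
      (Ring.inverse (fderiv ℝ (gradient (f t)) (xhat (t - 1)))
          (gradient (f t) (xhat (t - 1))) - p t)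
    rwa [norm_sub_rev (Ring.inverse (fderiv ℝ (gradient (f t)) (xhat (t - 1)))
        (gradient (f t) (xhat (t - 1)))) (p t)] at h3
  -- split the index set
  have hsplit : Finset.Icc 1 T = insert 1 (Finset.Icc 2 T) := by
    ext u; simp only [Finset.mem_Icc, Finset.mem_insert]; omega
  have h1nm : 1 ∉ Finset.Icc 2 T := by simp
  -- key1 : regret ≤ L * S + L * D + L * ‖N1‖²
  have key1 : ∑ t ∈ Icc 1 T, (f t (x t) - f t (xstar t)) ≤
      L * (∑ t ∈ Icc 1 T, ‖xhat t - xstar t‖ ^ 2) +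
      L * ∑ t ∈ Icc 2 T,
        ‖p t - Ring.inverse (fderiv ℝ (gradient (f t)) (xhat (t - 1)))
            (gradient (f t) (xhat (t - 1)))‖ ^ 2 +
      L * ‖Ring.inverse (fderiv ℝ (gradient (f 1)) (xhat 0))
            (gradient (f 1) (xhat 0))‖ ^ 2 := by
    have step1 : ∑ t ∈ Icc 1 T, (f t (x t) - f t (xstar t)) ≤
        ∑ t ∈ Icc 1 T, L / 2 * ‖x t - xstar t‖ ^ 2 := by
      refine Finset.sum_le_sum fun t ht => ?_
      rw [Finset.mem_Icc] at ht
      exact hregb t ht.1 ht.2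
    have step2 : ∑ t ∈ Icc 2 T, L / 2 * ‖x t - xstar t‖ ^ 2 ≤
        ∑ t ∈ Icc 2 T, (L * ‖xhat t - xstar t‖ ^ 2 +
          L * ‖p t - Ring.inverse (fderiv ℝ (gradient (f t)) (xhat (t - 1)))
              (gradient (f t) (xhat (t - 1)))‖ ^ 2) := by
      refine Finset.sum_le_sum fun t ht => ?_
      rw [Finset.mem_Icc] at ht
      have h4 := mul_le_mul_of_nonneg_left (htb t ht.1 ht.2) (by positivity : (0:ℝ) ≤ L / 2)
      linarith [h4]
    rw [hsplit, Finset.sum_insert h1nm, Finset.sum_insert h1nm]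
    rw [Finset.sum_add_distrib, ← Finset.mul_sum, ← Finset.mul_sum, ← Finset.mul_sum] at step2
    have step3 : L / 2 * ‖x 1 - xstar 1‖ ^ 2 ≤ L * ‖xhat 1 - xstar 1‖ ^ 2 +
        L * ‖Ring.inverse (fderiv ℝ (gradient (f 1)) (xhat 0))
              (gradient (f 1) (xhat 0))‖ ^ 2 := by
      have h4 := mul_le_mul_of_nonneg_left h1b (by positivity : (0:ℝ) ≤ L / 2)
      linarith [h4]
    calc (f 1 (x 1) - f 1 (xstar 1)) + ∑ t ∈ Icc 2 T, (f t (x t) - f t (xstar t))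
        ≤ L / 2 * ‖x 1 - xstar 1‖ ^ 2 + ∑ t ∈ Icc 2 T, L / 2 * ‖x t - xstar t‖ ^ 2 := by
          rw [hsplit, Finset.sum_insert h1nm, Finset.sum_insert h1nm] at step1
          exact step1
      _ ≤ _ := by
          have e1 : ∑ t ∈ Icc 2 T, L / 2 * ‖x t - xstar t‖ ^ 2 =
              L / 2 * ∑ t ∈ Icc 2 T, ‖x t - xstar t‖ ^ 2 := by
            rw [Finset.mul_sum]
          rw [mul_add, e1]
          linarith [step2, step3]
  -- key2 : sum of squared hat-distances bound
  have key2 : (∑ t ∈ Icc 1 T, ‖xhat t - xstar t‖ ^ 2) ≤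
      (‖xhat 1 - xstar 1‖ ^ 2 - ρ' * ‖xhat T - xstar T‖ ^ 2) / (1 - ρ') +
        ρ'' / (1 - ρ') * ∑ t ∈ Icc 2 T, ‖xstar t - xstar (t - 1)‖ ^ 4 := by
    have h := hsum T hT le_rfl
    have he : (‖xhat 1 - xstar 1‖ ^ 2 - ρ' * ‖xhat T - xstar T‖ ^ 2) / (1 - ρ') +
        ρ'' / (1 - ρ') * ∑ t ∈ Icc 2 T, ‖xstar t - xstar (t - 1)‖ ^ 4 =
        (‖xhat 1 - xstar 1‖ ^ 2 - ρ' * ‖xhat T - xstar T‖ ^ 2 +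
          ρ'' * ∑ t ∈ Icc 2 T, ‖xstar t - xstar (t - 1)‖ ^ 4) / (1 - ρ') := by
      ring
    rw [he, le_div_iff₀ hρpos]
    linarith
  calc ∑ t ∈ Icc 1 T, (f t (x t) - f t (xstar t))
      ≤ _ := key1
    _ ≤ _ := by
        have := mul_le_mul_of_nonneg_left key2 hL.le
        linarith
end

section
/- Let f_1, …, f_{T+1} : ℝ^n → ℝ be twice continuously differentiable, each μ-strongly convex (μ > 0) with minimizer x*_t and with L_H-Lipschitz Hessian (‖∇²f_t(x) − ∇²f_t(y)‖_op ≤ L_H‖x − y‖ for all x, y). Define x̂_0 = x_1 with ‖x_1 − x*_1‖ ≤ μ/L_H, and x̂_t = x̂_{t-1} − (∇²f_t(x̂_{t-1}))^{-1} ∇f_t(x̂_{t-1}) for t ≥ 1. If max_{2 ≤ t ≤ T+1} ‖x*_t − x*_{t-1}‖ ≤ μ/(2L_H), then ‖x̂_t − x*_{t+1}‖ ≤ μ/L_H for every t = 0, 1, …, T. -/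
open scoped RealInnerProductSpace
set_option maxHeartbeats 1000000
set_option synthInstance.maxHeartbeats 200000

noncomputable section

-- gradient is C¹ when f is C²
lemma oon_grad_contDiff {n : ℕ} {f : EuclideanSpace ℝ (Fin n) → ℝ} (hf : ContDiff ℝ 2 f) :
    ContDiff ℝ 1 (gradient f) := by
  have h1 : ContDiff ℝ 1 (fderiv ℝ f) := hf.fderiv_right (by norm_num)
  exact (InnerProductSpace.toDual ℝ (EuclideanSpace ℝ (Fin n))).symm.contDiff.comp h1

-- gradient vanishes at a global minimum
lemma oon_grad_zero {n : ℕ} {f : EuclideanSpace ℝ (Fin n) → ℝ} {y : EuclideanSpace ℝ (Fin n)}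
    (hmin : ∀ x, f y ≤ f x) : gradient f y = 0 := by
  have hl : IsLocalMin f y := Filter.Eventually.of_forall fun x => hmin x
  have := hl.fderiv_eq_zero
  simp [gradient, this]

-- Taylor bound with factor 1/2
lemma oon_taylor {n : ℕ} {g : EuclideanSpace ℝ (Fin n) → EuclideanSpace ℝ (Fin n)}
    (hg : ContDiff ℝ 1 g) {L : ℝ}
    (hL : ∀ x y, ‖fderiv ℝ g x - fderiv ℝ g y‖ ≤ L * ‖x - y‖) (x y : EuclideanSpace ℝ (Fin n)) :
    ‖g y - g x - fderiv ℝ g x (y - x)‖ ≤ L / 2 * ‖y - x‖ ^ 2 := by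
  set u := y - x with hu
  set H := fderiv ℝ g with hH
  have hdiff : Differentiable ℝ g := hg.differentiable (by norm_num)
  have hHcont : Continuous H := hg.continuous_fderiv (by norm_num)
  have key : ∀ s : ℝ, HasDerivAt (fun s : ℝ => g (x + s • u) - s • (H x u))
      (H (x + s • u) u - H x u) s := by
    intro s
    have h1 : HasDerivAt (fun s : ℝ => x + s • u) u s := by
      simpa using ((hasDerivAt_id s).smul_const u).const_add x
    have h2 := ((hdiff (x + s • u)).hasFDerivAt).comp_hasDerivAt s h1
    have h3 := h2.sub ((hasDerivAt_id s).smul_const (H x u))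
    simp at h3
    exact h3
  have hcont : Continuous fun s : ℝ => H (x + s • u) u - H x u := by
    have : Continuous fun s : ℝ => H (x + s • u) :=
      hHcont.comp (by continuity)
    exact ((this.clm_apply continuous_const).sub continuous_const)
  have hint : IntervalIntegrable (fun s : ℝ => H (x + s • u) u - H x u)
      MeasureTheory.volume 0 1 := hcont.intervalIntegrable 0 1
  have heq := intervalIntegral.integral_eq_sub_of_hasDerivAt (f := fun s : ℝ => g (x + s • u) - s • (H x u))
    (fun s _ => key s) hint
  have hval : (∫ s in (0:ℝ)..1, (H (x + s • u) u - H x u)) = g y - g x - H x u := by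
    rw [heq]
    simp [hu]
    abel
  have hbnd : ‖∫ s in (0:ℝ)..1, (H (x + s • u) u - H x u)‖
      ≤ |∫ s in (0:ℝ)..1, (L * ‖u‖ ^ 2) * s| := by
    apply intervalIntegral.norm_integral_le_abs_of_norm_le
    · filter_upwards [MeasureTheory.ae_restrict_mem measurableSet_Ioc] with s hs
      rw [Set.uIoc_of_le (by norm_num : (0:ℝ) ≤ 1)] at hs
      have h1 : ‖H (x + s • u) u - H x u‖ ≤ ‖H (x + s • u) - H x‖ * ‖u‖ := by
        have := (H (x + s • u) - H x).le_opNorm u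
        simpa using this
      have h2 : ‖H (x + s • u) - H x‖ ≤ L * ‖s • u‖ := by
        simpa using hL (x + s • u) x
      have h3 : ‖s • u‖ = s * ‖u‖ := by
        rw [norm_smul, Real.norm_eq_abs, abs_of_pos hs.1]
      calc ‖H (x + s • u) u - H x u‖ ≤ (L * (s * ‖u‖)) * ‖u‖ := by
            refine h1.trans (mul_le_mul_of_nonneg_right ?_ (norm_nonneg u))
            rw [← h3]; exact h2
        _ = (L * ‖u‖ ^ 2) * s := by ring
    · exact (continuous_const.mul continuous_id).intervalIntegrable 0 1
  have hintval : (∫ s in (0:ℝ)..1, (L * ‖u‖ ^ 2) * s) = L / 2 * ‖u‖ ^ 2 := by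
    rw [intervalIntegral.integral_const_mul, integral_id]
    ring
  rw [hval, hintval] at hbnd
  rcases eq_or_ne y x with rfl | hne
  · simp [hu] at *
  · have hLnn : 0 ≤ L := by
      have h0 := hL y x
      have hpos : 0 < ‖y - x‖ := by
        simpa [sub_eq_zero] using hne
      nlinarith [norm_nonneg (fderiv ℝ g y - fderiv ℝ g x)]
    calc ‖g y - g x - H x u‖ ≤ |L / 2 * ‖u‖ ^ 2| := hbnd
      _ = L / 2 * ‖u‖ ^ 2 := abs_of_nonneg (by positivity)

lemma oon_newton {n : ℕ} {f : EuclideanSpace ℝ (Fin n) → ℝ} {μ L : ℝ}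
    (hμ : 0 < μ) (hf : ContDiff ℝ 2 f)
    (hstrong : ∀ x v, μ * ‖v‖ ^ 2 ≤ ⟪fderiv ℝ (gradient f) x v, v⟫)
    (hL : ∀ x y, ‖fderiv ℝ (gradient f) x - fderiv ℝ (gradient f) y‖ ≤ L * ‖x - y‖)
    {q : EuclideanSpace ℝ (Fin n)} (hq : ∀ x, f q ≤ f x) (p : EuclideanSpace ℝ (Fin n)) :
    ‖p - Ring.inverse (fderiv ℝ (gradient f) p) (gradient f p) - q‖
      ≤ L / (2 * μ) * ‖p - q‖ ^ 2 := by
  set g := gradient f with hg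
  set H := fderiv ℝ g p with hH
  have hgrow : ∀ v, μ * ‖v‖ ≤ ‖H v‖ := by
    intro v
    rcases eq_or_ne v 0 with rfl | hv
    · simp
    · have h1 := hstrong p v
      have h2 : ⟪H v, v⟫ ≤ ‖H v‖ * ‖v‖ := real_inner_le_norm _ _
      have hvpos : 0 < ‖v‖ := norm_pos_iff.mpr hv
      nlinarith
  have hinj : Function.Injective H := by
    intro a b hab
    have h0 : H (a - b) = 0 := by rw [map_sub, hab, sub_self]
    have h1 := hgrow (a - b)
    rw [h0, norm_zero] at h1
    have : ‖a - b‖ ≤ 0 := by nlinarith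
    have h2 : a - b = 0 := norm_eq_zero.mp (le_antisymm this (norm_nonneg _))
    exact sub_eq_zero.mp h2
  have hsurj : Function.Surjective H :=
    LinearMap.injective_iff_surjective.mp hinj
  have hu : IsUnit H := by
    refine ⟨(ContinuousLinearEquiv.unitsEquiv ℝ _).symm
      (LinearEquiv.ofBijective (H : EuclideanSpace ℝ (Fin n) →ₗ[ℝ] EuclideanSpace ℝ (Fin n))
        ⟨hinj, hsurj⟩).toContinuousLinearEquiv, ?_⟩
    ext v; rfl
  have hHinv : H (Ring.inverse H (g p)) = g p := by
    have hc := Ring.mul_inverse_cancel H hu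
    calc H (Ring.inverse H (g p)) = (H * Ring.inverse H) (g p) := rfl
      _ = g p := by rw [hc]; rfl
  have hq0 : g q = 0 := oon_grad_zero hq
  set z := p - Ring.inverse H (g p) - q with hz
  have hHz : H z = g q - g p - H (q - p) := by
    have h1 : z = (p - q) - Ring.inverse H (g p) := by rw [hz]; abel
    rw [h1, map_sub, hHinv, hq0, map_sub, map_sub]
    abel
  have htaylor := oon_taylor (oon_grad_contDiff hf) hL p q
  have hnorm : ‖H z‖ ≤ L / 2 * ‖p - q‖ ^ 2 := by
    rw [hHz]
    have h2 := htaylor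
    rw [norm_sub_rev q p] at h2
    exact h2
  have hmuz := hgrow z
  have : ‖z‖ ≤ L / (2 * μ) * ‖p - q‖ ^ 2 := by
    rw [div_mul_eq_mul_div, le_div_iff₀ (by positivity : (0:ℝ) < 2 * μ)]
    nlinarith
  exact this

/-- Lemma: boundedness of the online Newton tracking error. -/
theorem oon_tracking_bounded {n : ℕ} (T : ℕ)
    (f : ℕ → EuclideanSpace ℝ (Fin n) → ℝ)
    (μ LH : ℝ) (hμ : 0 < μ) (hLH : 0 < LH)
    (xstar : ℕ → EuclideanSpace ℝ (Fin n))
    (hC2 : ∀ t, 1 ≤ t → t ≤ T + 1 → ContDiff ℝ 2 (f t))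
    (hstrong : ∀ t, 1 ≤ t → t ≤ T + 1 → ∀ x v,
      μ * ‖v‖ ^ 2 ≤ ⟪fderiv ℝ (gradient (f t)) x v, v⟫)
    (hmin : ∀ t, 1 ≤ t → t ≤ T + 1 → ∀ x, f t (xstar t) ≤ f t x)
    (hHessLip : ∀ t, 1 ≤ t → t ≤ T + 1 → ∀ x y,
      ‖fderiv ℝ (gradient (f t)) x - fderiv ℝ (gradient (f t)) y‖ ≤ LH * ‖x - y‖)
    (xhat : ℕ → EuclideanSpace ℝ (Fin n)) (x1 : EuclideanSpace ℝ (Fin n))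
    (hxhat0 : xhat 0 = x1)
    (hinit : ‖x1 - xstar 1‖ ≤ μ / LH)
    (hxhat : ∀ t, 1 ≤ t → t ≤ T →
      xhat t = xhat (t - 1) -
        Ring.inverse (fderiv ℝ (gradient (f t)) (xhat (t - 1)))
          (gradient (f t) (xhat (t - 1))))
    (hpath : ∀ t, 2 ≤ t → t ≤ T + 1 → ‖xstar t - xstar (t - 1)‖ ≤ μ / (2 * LH)) :
    ∀ t, t ≤ T → ‖xhat t - xstar (t + 1)‖ ≤ μ / LH := by
  intro t
  induction t with
  | zero => intro _; rw [hxhat0]; exact hinit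
  | succ t ih =>
    intro ht
    have hIH : ‖xhat t - xstar (t + 1)‖ ≤ μ / LH := ih (by omega)
    -- Newton step at round t+1
    have h1 : (1:ℕ) ≤ t + 1 := by omega
    have h2 : t + 1 ≤ T + 1 := by omega
    have hrec := hxhat (t + 1) h1 (by omega)
    simp only [Nat.add_sub_cancel] at hrec
    have hnewton := oon_newton (μ := μ) (L := LH) hμ (hC2 (t+1) h1 h2)
      (hstrong (t+1) h1 h2) (hHessLip (t+1) h1 h2)
      (hmin (t+1) h1 h2) (xhat t)
    rw [← hrec] at hnewton
    -- ‖xhat (t+1) - xstar (t+1)‖ ≤ LH/(2μ) * ‖xhat t - xstar (t+1)‖² ≤ μ/(2 LH)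
    have hsq : LH / (2 * μ) * ‖xhat t - xstar (t + 1)‖ ^ 2 ≤ μ / (2 * LH) := by
      have hnn : (0:ℝ) ≤ ‖xhat t - xstar (t + 1)‖ := norm_nonneg _
      have hb : ‖xhat t - xstar (t + 1)‖ ^ 2 ≤ (μ / LH) ^ 2 := by
        apply pow_le_pow_left₀ hnn hIH
      calc LH / (2 * μ) * ‖xhat t - xstar (t + 1)‖ ^ 2
          ≤ LH / (2 * μ) * (μ / LH) ^ 2 := by
            apply mul_le_mul_of_nonneg_left hb (by positivity)
        _ = μ / (2 * LH) := by field_simp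
    have hstep : ‖xhat (t + 1) - xstar (t + 1)‖ ≤ μ / (2 * LH) := le_trans hnewton hsq
    have hpathstep : ‖xstar (t + 2) - xstar (t + 1)‖ ≤ μ / (2 * LH) := by
      have := hpath (t + 2) (by omega) (by omega)
      simpa using this
    calc ‖xhat (t + 1) - xstar (t + 1 + 1)‖
        ≤ ‖xhat (t + 1) - xstar (t + 1)‖ + ‖xstar (t + 1) - xstar (t + 2)‖ := by
          have h := norm_sub_le (xhat (t + 1) - xstar (t + 1)) (xstar (t + 2) - xstar (t + 1))
          have heq : xhat (t + 1) - xstar (t + 1) - (xstar (t + 2) - xstar (t + 1))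
              = xhat (t + 1) - xstar (t + 2) := by abel
          rw [heq] at h
          rw [show t + 1 + 1 = t + 2 from rfl, norm_sub_rev (xstar (t+1)) (xstar (t+2))]
          exact h
      _ ≤ μ / (2 * LH) + μ / (2 * LH) := by
          rw [norm_sub_rev (xstar (t+1))]
          exact add_le_add hstep hpathstep
      _ = μ / LH := by field_simp; ring

end
end

section
/- Let f_1, …, f_T : ℝ^n → ℝ be twice continuously differentiable, each μ-strongly convex with minimizer x*_t and with L_H-Lipschitz Hessian, let x̂_0 = x_1 satisfy ‖x_1 − x*_1‖ ≤ μ/L_H, let x̂_t = x̂_{t-1} − (∇²f_t(x̂_{t-1}))^{-1}∇f_t(x̂_{t-1}), and suppose max_{2 ≤ t ≤ T}‖x*_t − x*_{t-1}‖ ≤ μ/(2L_H). Then for any constants c_1, c_2 > 0 and every 1 ≤ t ≤ T−1: ‖x̂_{t+1} − x*_{t+1}‖² ≤ (1/16)(1+c_1)²(1+c_2)·‖x̂_t − x*_t‖² + (L_H/(2μ))²(1+1/c_1)²(1+1/c_2)·‖x*_{t+1} − x*_t‖⁴. -/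
open scoped RealInnerProductSpace

section Aux

variable {E : Type*} [NormedAddCommGroup E] [InnerProductSpace ℝ E] [FiniteDimensional ℝ E]

omit [FiniteDimensional ℝ E] in
private lemma oon_coercive_norm_le {μ : ℝ} (A : E →L[ℝ] E)
    (hA : ∀ v, μ * ‖v‖ ^ 2 ≤ ⟪A v, v⟫) : ∀ v, μ * ‖v‖ ≤ ‖A v‖ := by
  intro v
  rcases eq_or_ne v 0 with rfl | hv
  · simp
  · have h1 : μ * ‖v‖ ^ 2 ≤ ‖A v‖ * ‖v‖ :=
      (hA v).trans ((real_inner_le_norm _ _))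
    have hvpos : 0 < ‖v‖ := norm_pos_iff.mpr hv
    nlinarith

private lemma oon_coercive_isUnit {μ : ℝ} (hμ : 0 < μ) (A : E →L[ℝ] E)
    (hA : ∀ v, μ * ‖v‖ ^ 2 ≤ ⟪A v, v⟫) : IsUnit A := by
  have hinj : Function.Injective A := by
    intro a b hab
    have h := oon_coercive_norm_le A hA (a - b)
    rw [map_sub, hab, sub_self] at h
    simp at h
    have h2 : ‖a - b‖ ≤ 0 := by nlinarith [norm_nonneg (a - b)]
    have := norm_le_zero_iff.mp h2
    rwa [sub_eq_zero] at this
  have hsurj : Function.Surjective A :=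
    (LinearMap.injective_iff_surjective (f := (A : E →ₗ[ℝ] E))).mp hinj
  let e : E ≃ₗ[ℝ] E := LinearEquiv.ofBijective (A : E →ₗ[ℝ] E) ⟨hinj, hsurj⟩
  let einv : E →L[ℝ] E := LinearMap.toContinuousLinearMap (e.symm : E →ₗ[ℝ] E)
  refine isUnit_iff_exists.mpr ⟨einv, ?_, ?_⟩ <;>
  · ext x
    show _ = x
    simp [ContinuousLinearMap.mul_apply, einv]
    first
    | exact e.apply_symm_apply x
    | exact e.symm_apply_apply x

private lemma oon_inverse_bound {μ : ℝ} (hμ : 0 < μ) (A : E →L[ℝ] E)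
    (hA : ∀ v, μ * ‖v‖ ^ 2 ≤ ⟪A v, v⟫) (w : E) :
    μ * ‖Ring.inverse A w‖ ≤ ‖w‖ := by
  have hu := oon_coercive_isUnit hμ A hA
  have h := oon_coercive_norm_le A hA (Ring.inverse A w)
  have : A (Ring.inverse A w) = w := by
    have := Ring.mul_inverse_cancel A hu
    calc A (Ring.inverse A w) = (A * Ring.inverse A) w := rfl
      _ = w := by rw [this]; rfl
  rwa [this] at h

private lemma oon_gradient_contDiff {f : E → ℝ} (hf : ContDiff ℝ 2 f) :
    ContDiff ℝ 1 (gradient f) := by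
  have h1 : ContDiff ℝ 1 (fderiv ℝ f) := hf.fderiv_right (by norm_num)
  exact ((InnerProductSpace.toDual ℝ
    E).symm.toContinuousLinearEquiv.toContinuousLinearMap.contDiff).comp h1

private lemma oon_gradient_min_eq_zero {f : E → ℝ} {x0 : E} (h : ∀ x, f x0 ≤ f x) :
    gradient f x0 = 0 := by
  have hloc : IsLocalMin f x0 := Filter.Eventually.of_forall h
  have : fderiv ℝ f x0 = 0 := hloc.fderiv_eq_zero
  show (InnerProductSpace.toDual ℝ E).symm (fderiv ℝ f x0) = 0
  rw [this]; simp

private lemma oon_taylor_grad {f : E → ℝ} (hf : ContDiff ℝ 2 f) {LH : ℝ} (hLH : 0 ≤ LH)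
    (hLip : ∀ x y, ‖fderiv ℝ (gradient f) x - fderiv ℝ (gradient f) y‖ ≤ LH * ‖x - y‖)
    (x y : E) :
    ‖gradient f y - gradient f x - fderiv ℝ (gradient f) y (y - x)‖ ≤
      LH / 2 * ‖y - x‖ ^ 2 := by
  set H : E → E →L[ℝ] E := fderiv ℝ (gradient f) with hH
  have hgc : ContDiff ℝ 1 (gradient f) := oon_gradient_contDiff hf
  have hd : ∀ z, HasFDerivAt (gradient f) (H z) z :=
    fun z => (hgc.differentiable one_ne_zero z).hasFDerivAt
  have hHcont : Continuous H := hgc.continuous_fderiv one_ne_zero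
  set d : E := y - x with hdd
  have hcurve : ∀ s : ℝ, HasDerivAt (fun s : ℝ => x + s • d) d s := by
    intro s
    have h1 : HasDerivAt (fun s : ℝ => s • d) d s := by
      simpa using (hasDerivAt_id s).smul_const d
    simpa using h1.const_add x
  set g' : ℝ → E := fun s => H (x + s • d) d with hg'
  have hgderiv : ∀ s : ℝ, HasDerivAt (fun s : ℝ => gradient f (x + s • d)) (g' s) s := by
    intro s
    exact (hd (x + s • d)).comp_hasDerivAt s (hcurve s)
  have hcurvec : Continuous fun s : ℝ => x + s • d :=
    continuous_const.add (continuous_id.smul continuous_const)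
  have hg'cont : Continuous g' := (hHcont.comp hcurvec).clm_apply continuous_const
  have hftc : ∫ s in (0:ℝ)..1, g' s =
      gradient f (x + (1:ℝ) • d) - gradient f (x + (0:ℝ) • d) :=
    intervalIntegral.integral_eq_sub_of_hasDerivAt (fun s _ => hgderiv s)
      (hg'cont.intervalIntegrable 0 1)
  have hx1 : x + (1:ℝ) • d = y := by simp [hdd]
  have hx0 : x + (0:ℝ) • d = x := by simp
  rw [hx1, hx0] at hftc
  have hconst : ∫ s in (0:ℝ)..1, H y d = H y d := by simp
  have key : gradient f y - gradient f x - H y d = ∫ s in (0:ℝ)..1, (g' s - H y d) := by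
    rw [intervalIntegral.integral_sub (hg'cont.intervalIntegrable 0 1)
      (intervalIntegrable_const), hftc, hconst]
  rw [key]
  set c : ℝ := LH * ‖d‖ ^ 2 with hc
  have hφcont : Continuous fun s : ℝ => c * (1 - s) :=
    continuous_const.mul (continuous_const.sub continuous_id)
  have hφint : ∫ s in (0:ℝ)..1, c * (1 - s) = c / 2 := by
    have hid : IntervalIntegrable (fun s : ℝ => s) MeasureTheory.volume 0 1 :=
      continuous_id.intervalIntegrable 0 1
    have h1 : ∫ s in (0:ℝ)..1, (1 - s) = 1 / 2 := by
      rw [intervalIntegral.integral_sub intervalIntegrable_const hid]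
      simp [integral_id]
      norm_num
    rw [intervalIntegral.integral_const_mul, h1]
    ring
  have hbound : ∀ᵐ s ∂MeasureTheory.volume.restrict (Set.uIoc (0:ℝ) 1),
      ‖g' s - H y d‖ ≤ c * (1 - s) := by
    refine (MeasureTheory.ae_restrict_iff' measurableSet_uIoc).mpr
      (Filter.Eventually.of_forall ?_)
    intro s hs
    rw [Set.uIoc_of_le (by norm_num : (0:ℝ) ≤ 1)] at hs
    have h1 : g' s - H y d = (H (x + s • d) - H y) d := by
      simp [hg', ContinuousLinearMap.sub_apply]
    rw [h1]
    calc ‖(H (x + s • d) - H y) d‖ ≤ ‖H (x + s • d) - H y‖ * ‖d‖ :=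
          (H (x + s • d) - H y).le_opNorm d
      _ ≤ (LH * ‖x + s • d - y‖) * ‖d‖ :=
          mul_le_mul_of_nonneg_right (hLip _ _) (norm_nonneg d)
      _ ≤ c * (1 - s) := by
          have h2 : x + s • d - y = (s - 1) • d := by rw [hdd]; module
          rw [h2, norm_smul, Real.norm_eq_abs,
            abs_of_nonpos (by linarith [hs.2] : s - 1 ≤ 0)]
          rw [hc]; ring_nf; nlinarith [sq_nonneg ‖d‖, norm_nonneg d]
  calc ‖∫ s in (0:ℝ)..1, (g' s - H y d)‖ ≤ |∫ s in (0:ℝ)..1, c * (1 - s)| :=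
        intervalIntegral.norm_integral_le_abs_of_norm_le hbound
          (hφcont.intervalIntegrable 0 1)
    _ = LH / 2 * ‖y - x‖ ^ 2 := by
        rw [hφint, abs_of_nonneg (by positivity)]
        rw [hc, hdd]; ring

private lemma oon_newton_step {f : E → ℝ} (hf : ContDiff ℝ 2 f) {μ LH : ℝ}
    (hμ : 0 < μ) (hLH : 0 ≤ LH)
    (hstrong : ∀ x v, μ * ‖v‖ ^ 2 ≤ ⟪fderiv ℝ (gradient f) x v, v⟫)
    {xs : E} (hmin : ∀ x, f xs ≤ f x)
    (hLip : ∀ x y, ‖fderiv ℝ (gradient f) x - fderiv ℝ (gradient f) y‖ ≤ LH * ‖x - y‖)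
    (y : E) :
    ‖(y - Ring.inverse (fderiv ℝ (gradient f) y) (gradient f y)) - xs‖
      ≤ LH / (2 * μ) * ‖y - xs‖ ^ 2 := by
  set A : E →L[ℝ] E := fderiv ℝ (gradient f) y with hA
  have hu : IsUnit A := oon_coercive_isUnit hμ A (hstrong y)
  set B : E →L[ℝ] E := Ring.inverse A with hB
  have hBA : ∀ v, B (A v) = v := by
    intro v
    have h1 := Ring.inverse_mul_cancel A hu
    calc B (A v) = (Ring.inverse A * A) v := rfl
      _ = v := by rw [h1]; rfl
  set w : E := A (y - xs) - gradient f y with hw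
  have hkey : (y - B (gradient f y)) - xs = B w := by
    rw [hw, map_sub, hBA]
    abel
  rw [hkey]
  have h1 : μ * ‖B w‖ ≤ ‖w‖ := oon_inverse_bound hμ A (hstrong y) w
  have h2 : ‖w‖ ≤ LH / 2 * ‖y - xs‖ ^ 2 := by
    have h3 := oon_taylor_grad hf hLH hLip xs y
    rw [oon_gradient_min_eq_zero hmin, sub_zero] at h3
    calc ‖w‖ = ‖gradient f y - A (y - xs)‖ := by rw [hw, norm_sub_rev]
      _ ≤ LH / 2 * ‖y - xs‖ ^ 2 := h3
  have h3 := h1.trans h2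
  rw [div_mul_eq_mul_div, le_div_iff₀ (by positivity : (0:ℝ) < 2 * μ)]
  nlinarith [h3]

private lemma oon_young_sq {a b c : ℝ} (hc : 0 < c) :
    (a + b) ^ 2 ≤ (1 + c) * a ^ 2 + (1 + 1 / c) * b ^ 2 := by
  have h2 : c * (1 + 1 / c) = c + 1 := by field_simp
  nlinarith [sq_nonneg (c * a - b), sq_nonneg b, sq_nonneg a, hc]

private lemma oon_final_algebra {μ LH a b L c1 c2 : ℝ} (hμ : 0 < μ) (hLH : 0 < LH)
    (hc1 : 0 < c1) (hc2 : 0 < c2) (ha0 : 0 ≤ a) (hb0 : 0 ≤ b) (hL0 : 0 ≤ L)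
    (hL : L ≤ LH / (2 * μ) * (a + b) ^ 2) (ha : a ≤ μ / (2 * LH)) :
    L ^ 2 ≤ 1 / 16 * (1 + c1) ^ 2 * (1 + c2) * a ^ 2 +
      (LH / (2 * μ)) ^ 2 * (1 + 1 / c1) ^ 2 * (1 + 1 / c2) * b ^ 4 := by
  set K : ℝ := LH / (2 * μ) with hK
  have hK0 : 0 < K := by positivity
  have e1 : (a + b) ^ 2 ≤ (1 + c1) * a ^ 2 + (1 + 1 / c1) * b ^ 2 := oon_young_sq hc1
  set X : ℝ := (1 + c1) * a ^ 2 with hX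
  set Y : ℝ := (1 + 1 / c1) * b ^ 2 with hY
  have hX0 : 0 ≤ X := by positivity
  have hY0 : 0 ≤ Y := by positivity
  have e2 : (X + Y) ^ 2 ≤ (1 + c2) * X ^ 2 + (1 + 1 / c2) * Y ^ 2 := oon_young_sq hc2
  have hL2 : L ^ 2 ≤ K ^ 2 * (X + Y) ^ 2 := by
    have h1 : L ≤ K * (X + Y) :=
      hL.trans (mul_le_mul_of_nonneg_left e1 hK0.le)
    calc L ^ 2 ≤ (K * (X + Y)) ^ 2 := by
          apply pow_le_pow_left₀ hL0 h1
      _ = K ^ 2 * (X + Y) ^ 2 := by ring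
  have hKa : K ^ 2 * a ^ 2 ≤ 1 / 16 := by
    have h1 : K * a ≤ 1 / 4 := by
      calc K * a ≤ K * (μ / (2 * LH)) := mul_le_mul_of_nonneg_left ha hK0.le
        _ = 1 / 4 := by rw [hK]; field_simp; ring
    nlinarith [mul_nonneg hK0.le ha0]
  have hX2 : X ^ 2 = (1 + c1) ^ 2 * a ^ 4 := by rw [hX]; ring
  have hY2 : Y ^ 2 = (1 + 1 / c1) ^ 2 * b ^ 4 := by rw [hY]; ring
  have hpos : (0:ℝ) ≤ (1 + c2) * (1 + c1) ^ 2 * a ^ 2 := by positivity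
  have t1 : (1 + c2) * (1 + c1) ^ 2 * a ^ 2 * (K ^ 2 * a ^ 2) ≤
      (1 + c2) * (1 + c1) ^ 2 * a ^ 2 * (1 / 16) :=
    mul_le_mul_of_nonneg_left hKa hpos
  have t2 : K ^ 2 * ((1 + c2) * X ^ 2 + (1 + 1 / c2) * Y ^ 2) ≤
      1 / 16 * (1 + c1) ^ 2 * (1 + c2) * a ^ 2 +
        K ^ 2 * (1 + 1 / c1) ^ 2 * (1 + 1 / c2) * b ^ 4 := by
    rw [hX2, hY2]; nlinarith [t1]
  calc L ^ 2 ≤ K ^ 2 * (X + Y) ^ 2 := hL2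
    _ ≤ K ^ 2 * ((1 + c2) * X ^ 2 + (1 + 1 / c2) * Y ^ 2) :=
        mul_le_mul_of_nonneg_left e2 (by positivity)
    _ ≤ _ := t2

end Aux

/-- One-step recursion for the online Newton tracking error. -/
theorem oon_tracking_recursion {n : ℕ} (T : ℕ)
    (f : ℕ → EuclideanSpace ℝ (Fin n) → ℝ)
    (μ LH : ℝ) (hμ : 0 < μ) (hLH : 0 < LH)
    (xstar : ℕ → EuclideanSpace ℝ (Fin n))
    (hC2 : ∀ t, 1 ≤ t → t ≤ T → ContDiff ℝ 2 (f t))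
    (hstrong : ∀ t, 1 ≤ t → t ≤ T → ∀ x v,
      μ * ‖v‖ ^ 2 ≤ ⟪fderiv ℝ (gradient (f t)) x v, v⟫)
    (hmin : ∀ t, 1 ≤ t → t ≤ T → ∀ x, f t (xstar t) ≤ f t x)
    (hHessLip : ∀ t, 1 ≤ t → t ≤ T → ∀ x y,
      ‖fderiv ℝ (gradient (f t)) x - fderiv ℝ (gradient (f t)) y‖ ≤ LH * ‖x - y‖)
    (xhat : ℕ → EuclideanSpace ℝ (Fin n)) (x1 : EuclideanSpace ℝ (Fin n))
    (hxhat0 : xhat 0 = x1)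
    (hinit : ‖x1 - xstar 1‖ ≤ μ / LH)
    (hxhat : ∀ t, 1 ≤ t → t ≤ T →
      xhat t = xhat (t - 1) -
        Ring.inverse (fderiv ℝ (gradient (f t)) (xhat (t - 1)))
          (gradient (f t) (xhat (t - 1))))
    (hpath : ∀ t, 2 ≤ t → t ≤ T → ‖xstar t - xstar (t - 1)‖ ≤ μ / (2 * LH))
    (c1 c2 : ℝ) (hc1 : 0 < c1) (hc2 : 0 < c2) :
    ∀ t, 1 ≤ t → t + 1 ≤ T →
      ‖xhat (t + 1) - xstar (t + 1)‖ ^ 2 ≤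
        (1 / 16) * (1 + c1) ^ 2 * (1 + c2) * ‖xhat t - xstar t‖ ^ 2 +
        (LH / (2 * μ)) ^ 2 * (1 + 1 / c1) ^ 2 * (1 + 1 / c2) *
          ‖xstar (t + 1) - xstar t‖ ^ 4 := by
  have hnewton : ∀ t, 1 ≤ t → t ≤ T →
      ‖xhat t - xstar t‖ ≤ LH / (2 * μ) * ‖xhat (t - 1) - xstar t‖ ^ 2 := by
    intro t h1 h2
    rw [hxhat t h1 h2]
    exact oon_newton_step (hC2 t h1 h2) hμ hLH.le (hstrong t h1 h2)
      (hmin t h1 h2) (hHessLip t h1 h2) _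
  have hsq : ∀ Y : ℝ, 0 ≤ Y → Y ≤ μ / LH → LH / (2 * μ) * Y ^ 2 ≤ μ / (2 * LH) := by
    intro Y hY0 hY
    have h1 : Y ^ 2 ≤ (μ / LH) ^ 2 := by
      apply pow_le_pow_left₀ hY0 hY
    calc LH / (2 * μ) * Y ^ 2 ≤ LH / (2 * μ) * (μ / LH) ^ 2 :=
          mul_le_mul_of_nonneg_left h1 (by positivity)
      _ = μ / (2 * LH) := by field_simp
  have hbdd : ∀ t, 1 ≤ t → t ≤ T → ‖xhat t - xstar t‖ ≤ μ / (2 * LH) := by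
    intro t
    induction t with
    | zero => intro h; exact absurd h (by norm_num)
    | succ k ih =>
      intro _ hle
      have hnew := hnewton (k + 1) (by omega) hle
      rw [Nat.add_sub_cancel] at hnew
      rcases Nat.eq_zero_or_pos k with rfl | hk
      · rw [hxhat0] at hnew
        exact hnew.trans (hsq _ (norm_nonneg _) hinit)
      · have ihk : ‖xhat k - xstar k‖ ≤ μ / (2 * LH) := ih hk (by omega)
        have hp := hpath (k + 1) (by omega) hle
        rw [Nat.add_sub_cancel] at hp
        have htri : ‖xhat k - xstar (k + 1)‖ ≤ μ / LH := by
          calc ‖xhat k - xstar (k + 1)‖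
              ≤ ‖xhat k - xstar k‖ + ‖xstar k - xstar (k + 1)‖ :=
                norm_sub_le_norm_sub_add_norm_sub _ _ _
            _ = ‖xhat k - xstar k‖ + ‖xstar (k + 1) - xstar k‖ := by
                rw [norm_sub_rev (xstar k)]
            _ ≤ μ / (2 * LH) + μ / (2 * LH) := add_le_add ihk hp
            _ = μ / LH := by field_simp; ring
        exact hnew.trans (hsq _ (norm_nonneg _) htri)
  intro t ht htT
  have ha := hbdd t ht (by omega)
  have hnew := hnewton (t + 1) (by omega) htT
  rw [Nat.add_sub_cancel] at hnew
  have htri : ‖xhat t - xstar (t + 1)‖ ≤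
      ‖xhat t - xstar t‖ + ‖xstar (t + 1) - xstar t‖ := by
    calc ‖xhat t - xstar (t + 1)‖
        ≤ ‖xhat t - xstar t‖ + ‖xstar t - xstar (t + 1)‖ :=
          norm_sub_le_norm_sub_add_norm_sub _ _ _
      _ = ‖xhat t - xstar t‖ + ‖xstar (t + 1) - xstar t‖ := by
          rw [norm_sub_rev (xstar t)]
  have hL : ‖xhat (t + 1) - xstar (t + 1)‖ ≤
      LH / (2 * μ) * (‖xhat t - xstar t‖ + ‖xstar (t + 1) - xstar t‖) ^ 2 := by
    refine hnew.trans (mul_le_mul_of_nonneg_left ?_ (by positivity))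
    exact pow_le_pow_left₀ (norm_nonneg _) htri 2
  exact oon_final_algebra hμ hLH hc1 hc2 (norm_nonneg _) (norm_nonneg _)
    (norm_nonneg _) hL ha
end

section
/- Fix a nonzero y ∈ ℝ^n, T ≥ 2, and a nonempty bounded set X ⊆ ℝ^n containing 0 and y, with R = sup_{x ∈ X} ‖x‖. Define f_t : ℝ^n → ℝ by f_t(x) = ‖x‖²/t if t is odd and f_t(x) = ‖x − y‖²/t if t is even. Then the minimizer of f_t is x*_t = 0 for odd t and x*_t = y for even t, so the squared path-length satisfies C*_{2,T} = Σ_{t=2}^T ‖x*_t − x*_{t-1}‖² = (T − 1)·‖y‖², while the functional variation satisfies V_T = Σ_{t=2}^T sup_{x ∈ X} |f_t(x) − f_{t-1}(x)| ≤ (4R‖y‖ + 2‖y‖² + 2R²)·Σ_{t=2}^T 1/t ≤ (4R‖y‖ + 2‖y‖² + 2R²)·log T. In particular V_T = O(log T) while C*_{2,T} = Θ(T). -/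
open Finset

private lemma harmonic_le_log : ∀ T : ℕ, 1 ≤ T →
    ∑ t ∈ Finset.Icc 2 T, (1 : ℝ) / t ≤ Real.log T := by
  intro T hT
  induction T with
  | zero => omega
  | succ T ih =>
    rcases Nat.lt_or_ge T 1 with h | h
    · interval_cases T
      simp
    · have hT0 : (0 : ℝ) < T := by exact_mod_cast h
      have hsum : ∑ t ∈ Finset.Icc 2 (T + 1), (1 : ℝ) / t
          = (∑ t ∈ Finset.Icc 2 T, (1 : ℝ) / t) + 1 / ((T : ℝ) + 1) := by
        rw [Finset.sum_Icc_succ_top (by omega)]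
        push_cast
        ring
      rw [hsum]
      have hlog : Real.log ((T : ℝ) / (T + 1)) ≤ (T : ℝ) / (T + 1) - 1 :=
        Real.log_le_sub_one_of_pos (by positivity)
      have hlogdiv : Real.log ((T : ℝ) / (T + 1)) = Real.log T - Real.log (T + 1) :=
        Real.log_div (ne_of_gt hT0) (by positivity)
      have h1 : (T : ℝ) / (T + 1) - 1 = -(1 / ((T : ℝ) + 1)) := by field_simp; ring
      rw [hlogdiv, h1] at hlog
      have h2 := ih h
      push_cast
      linarith

private lemma key_div (a b t D B : ℝ) (ht : 2 ≤ t) (hb : 0 ≤ b)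
    (hab : |a - b| ≤ D) (hbB : b ≤ B) (hB : 0 ≤ B) :
    |a / t - b / (t - 1)| ≤ (D + B) / t := by
  have ht0 : (0 : ℝ) < t := by linarith
  have ht1 : (0 : ℝ) < t - 1 := by linarith
  have h1 : a / t - b / (t - 1) = (a - b) / t - b / (t * (t - 1)) := by
    field_simp
    ring
  rw [h1]
  have h2 : |(a - b) / t - b / (t * (t - 1))| ≤ |(a - b) / t| + |b / (t * (t - 1))| :=
    abs_sub _ _
  have h3 : |(a - b) / t| = |a - b| / t := by
    rw [abs_div, abs_of_pos ht0]
  have h4 : |b / (t * (t - 1))| = b / (t * (t - 1)) := abs_of_nonneg (by positivity)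
  have h5 : b / (t * (t - 1)) ≤ B / t := by
    apply div_le_div₀ hB hbB ht0
    nlinarith
  have h6 : |a - b| / t ≤ D / t := by gcongr
  have h7 : (D + B) / t = D / t + B / t := add_div D B t
  linarith

/-- Example where `C*_{2,T} = Θ(T)` but `V_T = O(log T)`. -/
theorem example_C2T_large_VT_small {n : ℕ} (y : EuclideanSpace ℝ (Fin n))
    (hy : y ≠ 0) (T : ℕ) (hT : 2 ≤ T)
    (X : Set (EuclideanSpace ℝ (Fin n)))
    (hXne : X.Nonempty) (hXbdd : Bornology.IsBounded X)
    (h0X : (0 : EuclideanSpace ℝ (Fin n)) ∈ X) (hyX : y ∈ X)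
    (R : ℝ) (hR : R = sSup ((fun x => ‖x‖) '' X))
    (f : ℕ → EuclideanSpace ℝ (Fin n) → ℝ)
    (hf : ∀ t x, f t x =
      if Odd t then ‖x‖ ^ 2 / t else ‖x - y‖ ^ 2 / t)
    (xstar : ℕ → EuclideanSpace ℝ (Fin n))
    (hxs : ∀ t, xstar t = if Odd t then 0 else y) :
    (∀ t, 1 ≤ t → ∀ x, f t (xstar t) ≤ f t x) ∧
    (∑ t ∈ Icc 2 T, ‖xstar t - xstar (t - 1)‖ ^ 2 = ((T : ℝ) - 1) * ‖y‖ ^ 2) ∧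
    (∑ t ∈ Icc 2 T, sSup ((fun x => |f t x - f (t - 1) x|) '' X) ≤
      (4 * R * ‖y‖ + 2 * ‖y‖ ^ 2 + 2 * R ^ 2) * ∑ t ∈ Icc 2 T, (1 : ℝ) / t) ∧
    ((4 * R * ‖y‖ + 2 * ‖y‖ ^ 2 + 2 * R ^ 2) * ∑ t ∈ Icc 2 T, (1 : ℝ) / t ≤
      (4 * R * ‖y‖ + 2 * ‖y‖ ^ 2 + 2 * R ^ 2) * Real.log T) := by
  -- basic facts about R
  have hbdd : BddAbove ((fun x => ‖x‖) '' X) := by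
    obtain ⟨C, hC⟩ := isBounded_iff_forall_norm_le.mp hXbdd
    exact ⟨C, fun r ⟨x, hx, hxr⟩ => hxr ▸ hC x hx⟩
  have hnormR : ∀ x ∈ X, ‖x‖ ≤ R := by
    intro x hx
    rw [hR]
    exact le_csSup hbdd ⟨x, hx, rfl⟩
  have hR0 : 0 ≤ R := le_trans (norm_nonneg _) (hnormR 0 h0X)
  have hyR : ‖y‖ ≤ R := hnormR y hyX
  set K : ℝ := 4 * R * ‖y‖ + 2 * ‖y‖ ^ 2 + 2 * R ^ 2 with hK
  have hK0 : 0 ≤ K := by positivity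
  refine ⟨?_, ?_, ?_, ?_⟩
  · -- minimizer property
    intro t ht x
    rw [hf, hf, hxs]
    by_cases h : Odd t
    · simp only [h, if_true]
      have : ‖(0 : EuclideanSpace ℝ (Fin n))‖ ^ 2 / (t : ℝ) = 0 := by simp
      rw [this]
      positivity
    · simp only [h, if_false]
      have : ‖y - y‖ ^ 2 / (t : ℝ) = 0 := by simp
      rw [this]
      positivity
  · -- path length
    have hterm : ∀ t ∈ Icc 2 T, ‖xstar t - xstar (t - 1)‖ ^ 2 = ‖y‖ ^ 2 := by
      intro t ht
      simp only [Finset.mem_Icc] at ht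
      rcases Nat.even_or_odd t with he | ho
      · have h1 : ¬ Odd t := Nat.not_odd_iff_even.mpr he
        have h2 : Odd (t - 1) := Nat.Even.sub_odd (by omega) he odd_one
        rw [hxs, hxs]
        simp [h1, h2]
      · have h1 : Odd t := ho
        have h2 : ¬ Odd (t - 1) := by
          obtain ⟨k, hk⟩ := ho
          exact Nat.not_odd_iff_even.mpr ⟨k, by omega⟩
        rw [hxs, hxs]
        simp [h1, h2]
      done
    rw [Finset.sum_congr rfl hterm, Finset.sum_const, Nat.card_Icc]
    have : ((T + 1 - 2 : ℕ) : ℝ) = (T : ℝ) - 1 := by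
      have : (T + 1 - 2 : ℕ) = T - 1 := by omega
      rw [this, Nat.cast_sub (by omega)]
      simp
    rw [nsmul_eq_mul, this]
  · -- V_T bound
    have hterm : ∀ t ∈ Icc 2 T,
        sSup ((fun x => |f t x - f (t - 1) x|) '' X) ≤ K * (1 / (t : ℝ)) := by
      intro t ht
      simp only [Finset.mem_Icc] at ht
      have ht2 : (2 : ℝ) ≤ (t : ℝ) := by exact_mod_cast ht.1
      have htcast : ((t - 1 : ℕ) : ℝ) = (t : ℝ) - 1 := by
        rw [Nat.cast_sub (by omega)]; simp
      apply Real.sSup_le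
      · rintro r ⟨x, hx, rfl⟩
        have hxR : ‖x‖ ≤ R := hnormR x hx
        have hxyR : ‖x - y‖ ≤ R + ‖y‖ := le_trans (norm_sub_le x y) (by linarith)
        have habs : |‖x‖ - ‖x - y‖| ≤ ‖y‖ := by
          have := abs_norm_sub_norm_le x (x - y)
          simpa using this
        have hD : |‖x‖ ^ 2 - ‖x - y‖ ^ 2| ≤ 2 * R * ‖y‖ + ‖y‖ ^ 2 := by
          rw [abs_le]
          obtain ⟨hl, hr⟩ := abs_le.mp habs
          constructor <;> nlinarith [norm_nonneg x, norm_nonneg (x - y), norm_nonneg y]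
        have hB1 : ‖x‖ ^ 2 ≤ R ^ 2 + 2 * R * ‖y‖ + ‖y‖ ^ 2 := by
          nlinarith [norm_nonneg x, norm_nonneg y]
        have hB2 : ‖x - y‖ ^ 2 ≤ R ^ 2 + 2 * R * ‖y‖ + ‖y‖ ^ 2 := by
          nlinarith [norm_nonneg (x - y), norm_nonneg y]
        have hDB : (2 * R * ‖y‖ + ‖y‖ ^ 2) + (R ^ 2 + 2 * R * ‖y‖ + ‖y‖ ^ 2) ≤ K := by
          rw [hK]; nlinarith
        have hparity : f t x - f (t - 1) x = ‖x‖ ^ 2 / t - ‖x - y‖ ^ 2 / ((t : ℝ) - 1) ∨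
            f t x - f (t - 1) x = ‖x - y‖ ^ 2 / t - ‖x‖ ^ 2 / ((t : ℝ) - 1) := by
          rcases Nat.even_or_odd t with he | ho
          · right
            have h1 : ¬ Odd t := Nat.not_odd_iff_even.mpr he
            have h2 : Odd (t - 1) := Nat.Even.sub_odd (by omega) he odd_one
            rw [hf, hf]
            simp [h1, h2, htcast]
          · left
            have h2 : ¬ Odd (t - 1) := by
              obtain ⟨k, hk⟩ := ho
              exact Nat.not_odd_iff_even.mpr ⟨k, by omega⟩
            rw [hf, hf]
            simp [ho, h2, htcast]
        have hfinal : |f t x - f (t - 1) x| ≤ K / t := by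
          rcases hparity with h | h <;> rw [h]
          · refine le_trans (key_div _ _ _ _ _ ht2 (by positivity) hD hB2 (by positivity)) ?_
            gcongr <;> linarith
          · refine le_trans (key_div _ _ _ (2 * R * ‖y‖ + ‖y‖ ^ 2) _ ht2 (by positivity)
              (by rw [abs_sub_comm]; exact hD) hB1 (by positivity)) ?_
            gcongr <;> linarith
        calc |f t x - f (t - 1) x| ≤ K / t := hfinal
          _ = K * (1 / t) := by ring
      · positivity
    calc ∑ t ∈ Icc 2 T, sSup ((fun x => |f t x - f (t - 1) x|) '' X)
        ≤ ∑ t ∈ Icc 2 T, K * (1 / (t : ℝ)) := Finset.sum_le_sum hterm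
      _ = K * ∑ t ∈ Icc 2 T, (1 : ℝ) / t := by rw [Finset.mul_sum]
  · -- log bound
    exact mul_le_mul_of_nonneg_left (harmonic_le_log T (by omega)) hK0
end

section
/- Let f_1, …, f_T : ℝ^n → ℝ be twice continuously differentiable, each μ-strongly convex and L-smooth (0 < μ ≤ L), with minimizers x*_t (so ∇f_t(x*_t) = 0). Let (x̂_t) be any sequence in ℝ^n. Then for every 2 ≤ t ≤ T: ‖(∇²f_{t-1}(x̂_{t-1}))^{-1}∇f_{t-1}(x̂_{t-1}) − (∇²f_t(x̂_{t-1}))^{-1}∇f_t(x̂_{t-1})‖² ≤ (6L²/μ²)·‖x̂_{t-1} − x*_{t-1}‖² + (4L²/μ²)·‖x*_t − x*_{t-1}‖². -/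
open scoped RealInnerProductSpace

lemma grad_norm_le {n : ℕ} (f : EuclideanSpace ℝ (Fin n) → ℝ)
    (μ L : ℝ) (hμ : 0 < μ) (hμL : μ ≤ L)
    (xs : EuclideanSpace ℝ (Fin n))
    (hstrong : ∀ x y, f y + ⟪gradient f y, x - y⟫ + μ / 2 * ‖x - y‖ ^ 2 ≤ f x)
    (hsmooth : ∀ x y, f x ≤ f y + ⟪gradient f y, x - y⟫ + L / 2 * ‖x - y‖ ^ 2)
    (h0 : gradient f xs = 0) (x : EuclideanSpace ℝ (Fin n)) :
    ‖gradient f x‖ ≤ L * ‖x - xs‖ := by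
  have hL : 0 < L := lt_of_lt_of_le hμ hμL
  set g := gradient f with hg
  set u := g x with hu
  set z := x - L⁻¹ • u with hz
  set z' := xs + L⁻¹ • u with hz'
  have e1 : z - x = -(L⁻¹ • u) := by rw [hz]; abel
  have e2 : z' - xs = L⁻¹ • u := by rw [hz']; abel
  have nsq : ‖L⁻¹ • u‖ ^ 2 = L⁻¹ ^ 2 * ‖u‖ ^ 2 := by
    rw [norm_smul, mul_pow, Real.norm_eq_abs, sq_abs]
  -- (1)
  have h1 : f z ≤ f x - ‖u‖ ^ 2 / (2 * L) := by
    have := hsmooth z x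
    rw [e1] at this
    rw [inner_neg_right, real_inner_smul_right, real_inner_self_eq_norm_sq,
      norm_neg, nsq] at this
    calc f z ≤ f x + -(L⁻¹ * ‖u‖ ^ 2) + L / 2 * (L⁻¹ ^ 2 * ‖u‖ ^ 2) := this
    _ = f x - ‖u‖ ^ 2 / (2 * L) := by field_simp; ring
  -- (2)
  have h2 : f xs ≤ f z := by
    have := hstrong z xs
    rw [h0] at this
    simp only [inner_zero_left] at this
    nlinarith [sq_nonneg ‖z - xs‖]
  -- (3)
  have h3 : f z' ≤ f xs + ‖u‖ ^ 2 / (2 * L) := by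
    have := hsmooth z' xs
    rw [h0] at this
    simp only [inner_zero_left] at this
    rw [e2, nsq] at this
    calc f z' ≤ f xs + 0 + L / 2 * (L⁻¹ ^ 2 * ‖u‖ ^ 2) := this
    _ = f xs + ‖u‖ ^ 2 / (2 * L) := by field_simp; ring
  -- (4)
  have h4 : f x + ⟪u, xs - x⟫ + L⁻¹ * ‖u‖ ^ 2 ≤ f z' := by
    have := hstrong z' x
    have ez : z' - x = (xs - x) + L⁻¹ • u := by rw [hz']; abel
    rw [ez, inner_add_right, real_inner_smul_right, real_inner_self_eq_norm_sq] at this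
    nlinarith [sq_nonneg ‖xs - x + L⁻¹ • u‖]
  have key : ‖u‖ ^ 2 ≤ L * ⟪u, x - xs⟫ := by
    have hi : ⟪u, xs - x⟫ = -⟪u, x - xs⟫ := by
      rw [← inner_neg_right]; congr 1; abel
    rw [hi] at h4
    have : -⟪u, x - xs⟫ + L⁻¹ * ‖u‖ ^ 2 ≤ 0 := by linarith
    have h5 : L⁻¹ * ‖u‖ ^ 2 ≤ ⟪u, x - xs⟫ := by linarith
    calc ‖u‖ ^ 2 = L * (L⁻¹ * ‖u‖ ^ 2) := by
          rw [← mul_assoc, mul_inv_cancel₀ hL.ne', one_mul]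
    _ ≤ L * ⟪u, x - xs⟫ := mul_le_mul_of_nonneg_left h5 hL.le
  have cs : ⟪u, x - xs⟫ ≤ ‖u‖ * ‖x - xs‖ := real_inner_le_norm u (x - xs)
  rcases eq_or_ne u 0 with h | h
  · rw [h, norm_zero]; positivity
  · have hu0 : 0 < ‖u‖ := norm_pos_iff.mpr h
    have h6 : ‖u‖ ^ 2 ≤ L * (‖u‖ * ‖x - xs‖) :=
      le_trans key (mul_le_mul_of_nonneg_left cs hL.le)
    have h7 : ‖u‖ * ‖u‖ ≤ L * ‖x - xs‖ * ‖u‖ := by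
      calc ‖u‖ * ‖u‖ = ‖u‖ ^ 2 := (sq ‖u‖).symm
      _ ≤ L * (‖u‖ * ‖x - xs‖) := h6
      _ = L * ‖x - xs‖ * ‖u‖ := by ring
    exact le_of_mul_le_mul_right h7 hu0


lemma hessian_coercive {n : ℕ} (f : EuclideanSpace ℝ (Fin n) → ℝ)
    (μ : ℝ) (hμ : 0 < μ) (hC2 : ContDiff ℝ 2 f)
    (hstrong : ∀ x y, f y + ⟪gradient f y, x - y⟫ + μ / 2 * ‖x - y‖ ^ 2 ≤ f x)
    (x v : EuclideanSpace ℝ (Fin n)) :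
    μ * ‖v‖ ^ 2 ≤ ⟪fderiv ℝ (gradient f) x v, v⟫ := by
  set g := gradient f with hgdef
  -- gradient is C¹
  have hg1 : ContDiff ℝ 1 g := by
    have hfd : ContDiff ℝ 1 (fderiv ℝ f) := hC2.fderiv_right (by norm_num)
    have : g = fun y => (InnerProductSpace.toDual ℝ (EuclideanSpace ℝ (Fin n))).symm (fderiv ℝ f y) := by
      funext y; rfl
    rw [this]
    exact (InnerProductSpace.toDual ℝ (EuclideanSpace ℝ (Fin n))).symm.toContinuousLinearEquiv.contDiff.comp hfd
  -- monotonicity of gradient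
  have mono : ∀ a b : EuclideanSpace ℝ (Fin n), μ * ‖a - b‖ ^ 2 ≤ ⟪g a - g b, a - b⟫ := by
    intro a b
    have h1 := hstrong a b
    have h2 := hstrong b a
    rw [inner_sub_left]
    have hib : ⟪g a, b - a⟫ = -⟪g a, a - b⟫ := by
      rw [← inner_neg_right]; congr 1; abel
    rw [hib] at h2
    have hnn : ‖b - a‖ = ‖a - b‖ := norm_sub_rev b a
    rw [hnn] at h2
    linarith
  set H := fderiv ℝ g x with hHdef
  have hH : HasFDerivAt g H x := (hg1.differentiable one_ne_zero x).hasFDerivAt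
  have hline : HasDerivAt (fun s : ℝ => x + s • v) v 0 := by
    simpa using ((hasDerivAt_id (0:ℝ)).smul_const v).const_add x
  have hc : HasDerivAt (fun s : ℝ => g (x + s • v)) (H v) 0 := by
    have hH' : HasFDerivAt g H (x + (0:ℝ) • v) := by simpa using hH
    exact hH'.comp_hasDerivAt (0:ℝ) hline
  have hslope := hasDerivAt_iff_tendsto_slope.mp hc
  have hT : Filter.Tendsto (fun s : ℝ => ⟪slope (fun s : ℝ => g (x + s • v)) 0 s, v⟫)
      (nhdsWithin 0 {(0:ℝ)}ᶜ) (nhds ⟪H v, v⟫) :=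
    hslope.inner tendsto_const_nhds
  have hmono' : Filter.Tendsto (fun s : ℝ => ⟪slope (fun s : ℝ => g (x + s • v)) 0 s, v⟫)
      (nhdsWithin 0 (Set.Ioi 0)) (nhds ⟪H v, v⟫) :=
    hT.mono_left (nhdsWithin_mono 0 (fun s hs => ne_of_gt hs))
  refine ge_of_tendsto hmono' (eventually_nhdsWithin_of_forall ?_)
  intro s hs
  have hs0 : (0:ℝ) < s := hs
  have hc0 : g (x + (0:ℝ) • v) = g x := by norm_num
  have hsl : slope (fun s : ℝ => g (x + s • v)) 0 s
      = s⁻¹ • (g (x + s • v) - g x) := by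
    rw [slope_def_module]
    rw [hc0, sub_zero]
  rw [hsl, real_inner_smul_left]
  have hdiff : (x + s • v) - x = s • v := by abel
  have hkey : μ * (s ^ 2 * ‖v‖ ^ 2) ≤ s * ⟪g (x + s • v) - g x, v⟫ := by
    have := mono (x + s • v) x
    rw [hdiff, real_inner_smul_right] at this
    have hns : ‖s • v‖ ^ 2 = s ^ 2 * ‖v‖ ^ 2 := by
      rw [norm_smul, mul_pow, Real.norm_eq_abs, sq_abs]
    rw [hns] at this
    exact this
  have h8 : s * (s * (μ * ‖v‖ ^ 2)) ≤ s * ⟪g (x + s • v) - g x, v⟫ := by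
    calc s * (s * (μ * ‖v‖ ^ 2)) = μ * (s ^ 2 * ‖v‖ ^ 2) := by ring
    _ ≤ s * ⟪g (x + s • v) - g x, v⟫ := hkey
  have h9 := le_of_mul_le_mul_left h8 hs0
  calc μ * ‖v‖ ^ 2 = s⁻¹ * (s * (μ * ‖v‖ ^ 2)) := by
        rw [← mul_assoc, inv_mul_cancel₀ hs0.ne', one_mul]
  _ ≤ s⁻¹ * ⟪g (x + s • v) - g x, v⟫ :=
      mul_le_mul_of_nonneg_left h9 (inv_nonneg.mpr hs0.le)


lemma inverse_bound {n : ℕ} (H : EuclideanSpace ℝ (Fin n) →L[ℝ] EuclideanSpace ℝ (Fin n))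
    (μ : ℝ) (hμ : 0 < μ) (hco : ∀ v, μ * ‖v‖ ^ 2 ≤ ⟪H v, v⟫)
    (g : EuclideanSpace ℝ (Fin n)) :
    ‖Ring.inverse H g‖ ≤ μ⁻¹ * ‖g‖ := by
  have hinj : Function.Injective H.toLinearMap := by
    rw [← LinearMap.ker_eq_bot, LinearMap.ker_eq_bot']
    intro v hv
    have h1 := hco v
    rw [show H v = 0 from hv] at h1
    simp only [inner_zero_left] at h1
    have : ‖v‖ ^ 2 ≤ 0 := by nlinarith
    have : ‖v‖ = 0 := by nlinarith [sq_nonneg ‖v‖, norm_nonneg v]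
    exact norm_eq_zero.mp this
  have hsurj : Function.Surjective H.toLinearMap :=
    (LinearMap.injective_iff_surjective).mp hinj
  let e : EuclideanSpace ℝ (Fin n) ≃L[ℝ] EuclideanSpace ℝ (Fin n) :=
    (LinearEquiv.ofBijective H.toLinearMap ⟨hinj, hsurj⟩).toContinuousLinearEquiv
  have hunit : IsUnit H := by
    refine ⟨e.toUnit, ?_⟩
    ext v
    rfl
  have hmul : H * Ring.inverse H = 1 := Ring.mul_inverse_cancel H hunit
  set w := Ring.inverse H g with hw
  have hHw : H w = g := by
    have : (H * Ring.inverse H) g = g := by rw [hmul]; rfl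
    rwa [ContinuousLinearMap.mul_apply] at this
  have h1 : μ * ‖w‖ ^ 2 ≤ ⟪g, w⟫ := by
    have := hco w
    rwa [hHw] at this
  have h2 : ⟪g, w⟫ ≤ ‖g‖ * ‖w‖ := real_inner_le_norm g w
  rcases eq_or_ne w 0 with h | h
  · rw [h, norm_zero]; positivity
  · have hw0 : 0 < ‖w‖ := norm_pos_iff.mpr h
    have h3 : μ * ‖w‖ * ‖w‖ ≤ ‖g‖ * ‖w‖ := by
      calc μ * ‖w‖ * ‖w‖ = μ * ‖w‖ ^ 2 := by ring
      _ ≤ ⟪g, w⟫ := h1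
      _ ≤ ‖g‖ * ‖w‖ := h2
    have h4 : μ * ‖w‖ ≤ ‖g‖ := le_of_mul_le_mul_right h3 hw0
    calc ‖w‖ = μ⁻¹ * (μ * ‖w‖) := by rw [← mul_assoc, inv_mul_cancel₀ hμ.ne', one_mul]
    _ ≤ μ⁻¹ * ‖g‖ := mul_le_mul_of_nonneg_left h4 (inv_nonneg.mpr hμ.le)


/-- Bound on the difference of consecutive exact Newton
steps: the key estimate for stale-information OON. -/
theorem stale_newton_step_difference {n : ℕ} (T : ℕ)
    (f : ℕ → EuclideanSpace ℝ (Fin n) → ℝ)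
    (μ L : ℝ) (hμ : 0 < μ) (hμL : μ ≤ L)
    (xstar : ℕ → EuclideanSpace ℝ (Fin n))
    (hC2 : ∀ t, 1 ≤ t → t ≤ T → ContDiff ℝ 2 (f t))
    (hstrong : ∀ t, 1 ≤ t → t ≤ T → ∀ x y,
      f t y + ⟪gradient (f t) y, x - y⟫ + μ / 2 * ‖x - y‖ ^ 2 ≤ f t x)
    (hsmooth : ∀ t, 1 ≤ t → t ≤ T → ∀ x y,
      f t x ≤ f t y + ⟪gradient (f t) y, x - y⟫ + L / 2 * ‖x - y‖ ^ 2)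
    (hmin : ∀ t, 1 ≤ t → t ≤ T → ∀ x, f t (xstar t) ≤ f t x)
    (hgrad0 : ∀ t, 1 ≤ t → t ≤ T → gradient (f t) (xstar t) = 0)
    (xhat : ℕ → EuclideanSpace ℝ (Fin n)) :
    ∀ t, 2 ≤ t → t ≤ T →
      ‖Ring.inverse (fderiv ℝ (gradient (f (t - 1))) (xhat (t - 1)))
          (gradient (f (t - 1)) (xhat (t - 1))) -
        Ring.inverse (fderiv ℝ (gradient (f t)) (xhat (t - 1)))
          (gradient (f t) (xhat (t - 1)))‖ ^ 2 ≤
      (6 * L ^ 2 / μ ^ 2) * ‖xhat (t - 1) - xstar (t - 1)‖ ^ 2 +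
      (4 * L ^ 2 / μ ^ 2) * ‖xstar t - xstar (t - 1)‖ ^ 2 := by
  intro t h2t htT
  have h1t : 1 ≤ t := le_trans (by norm_num) h2t
  have h1s : 1 ≤ t - 1 := Nat.le_sub_one_of_lt h2t
  have hsT : t - 1 ≤ T := le_trans (Nat.sub_le t 1) htT
  set xh := xhat (t - 1) with hxh
  set a := ‖xh - xstar (t - 1)‖ with ha
  set b := ‖xstar t - xstar (t - 1)‖ with hb
  set A := Ring.inverse (fderiv ℝ (gradient (f (t - 1))) xh) (gradient (f (t - 1)) xh) with hA
  set B := Ring.inverse (fderiv ℝ (gradient (f t)) xh) (gradient (f t) xh) with hB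
  have hnA : ‖A‖ ≤ μ⁻¹ * (L * a) := by
    have hco := hessian_coercive (f (t - 1)) μ hμ (hC2 _ h1s hsT)
      (hstrong _ h1s hsT) xh
    have h1 := inverse_bound _ μ hμ hco (gradient (f (t - 1)) xh)
    have h2 := grad_norm_le (f (t - 1)) μ L hμ hμL (xstar (t - 1))
      (hstrong _ h1s hsT) (hsmooth _ h1s hsT) (hgrad0 _ h1s hsT) xh
    calc ‖A‖ ≤ μ⁻¹ * ‖gradient (f (t - 1)) xh‖ := h1
    _ ≤ μ⁻¹ * (L * a) := mul_le_mul_of_nonneg_left h2 (inv_nonneg.mpr hμ.le)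
  have hnB : ‖B‖ ≤ μ⁻¹ * (L * (a + b)) := by
    have hco := hessian_coercive (f t) μ hμ (hC2 _ h1t htT)
      (hstrong _ h1t htT) xh
    have h1 := inverse_bound _ μ hμ hco (gradient (f t) xh)
    have h2 := grad_norm_le (f t) μ L hμ hμL (xstar t)
      (hstrong _ h1t htT) (hsmooth _ h1t htT) (hgrad0 _ h1t htT) xh
    have hL : 0 < L := lt_of_lt_of_le hμ hμL
    have htri : ‖xh - xstar t‖ ≤ a + b := by
      have he : xh - xstar t = (xh - xstar (t - 1)) - (xstar t - xstar (t - 1)) := by abel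
      rw [he]
      exact norm_sub_le _ _
    calc ‖B‖ ≤ μ⁻¹ * ‖gradient (f t) xh‖ := h1
    _ ≤ μ⁻¹ * (L * ‖xh - xstar t‖) := mul_le_mul_of_nonneg_left h2 (inv_nonneg.mpr hμ.le)
    _ ≤ μ⁻¹ * (L * (a + b)) := by
        have := mul_le_mul_of_nonneg_left htri hL.le
        exact mul_le_mul_of_nonneg_left this (inv_nonneg.mpr hμ.le)
  have hsum : ‖A - B‖ ≤ μ⁻¹ * (L * a) + μ⁻¹ * (L * (a + b)) :=
    le_trans (norm_sub_le A B) (add_le_add hnA hnB)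
  have hsq : ‖A - B‖ ^ 2 ≤ (μ⁻¹ * (L * a) + μ⁻¹ * (L * (a + b))) ^ 2 :=
    pow_le_pow_left₀ (norm_nonneg _) hsum 2
  set c := μ⁻¹ * L with hc
  have hc0 : 0 ≤ c := mul_nonneg (inv_nonneg.mpr hμ.le) (le_trans hμ.le hμL)
  have hcsq : c ^ 2 = L ^ 2 / μ ^ 2 := by
    rw [hc, mul_pow, inv_pow, inv_mul_eq_div]
  have key2 : (μ⁻¹ * (L * a) + μ⁻¹ * (L * (a + b))) ^ 2 ≤ c ^ 2 * (6 * a ^ 2 + 4 * b ^ 2) := by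
    have h1 : (μ⁻¹ * (L * a) + μ⁻¹ * (L * (a + b))) ^ 2 = c ^ 2 * (2 * a + b) ^ 2 := by
      rw [hc]; ring
    rw [h1]
    nlinarith [mul_nonneg (sq_nonneg c) (sq_nonneg (a - b)),
      mul_nonneg (sq_nonneg c) (sq_nonneg b)]
  calc ‖A - B‖ ^ 2 ≤ c ^ 2 * (6 * a ^ 2 + 4 * b ^ 2) := le_trans hsq key2
  _ = (6 * L ^ 2 / μ ^ 2) * a ^ 2 + (4 * L ^ 2 / μ ^ 2) * b ^ 2 := by
      rw [hcsq]; ring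
end
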